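/- arXiv:1903.12123 — 5 statements merged into one kernel-verified Lean document; each statement's English description precedes it below -/
import Mathlib

section
/- Let Q be a nonempty norm-separable weak* compact convex subset of a dual Banach space X*. If (S,Q) is a nonexpansive and norm-distal dynamical system (with Q carrying the weak* topology), then S has a common fixed point in Q. -/
open NormedSpace Bornology Set

lemma frag_aux {Z : Type*} [TopologicalSpace Z] [CompactSpace Z] [T2Space Z]
    (F : ℕ → Set Z) (hF : ∀ k, IsClosed (F k)) (hcov : (⋃ k, F k) = univ)
    (W₁ : Set Z) (hW : IsOpen W₁) (hne : W₁.Nonempty) :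
    ∃ (U : Set Z) (k : ℕ), IsOpen U ∧ (U ∩ W₁).Nonempty ∧ U ∩ W₁ ⊆ F k := by
  classical
  set C : Set Z := closure W₁ with hC
  have hCc : IsClosed C := isClosed_closure
  haveI : CompactSpace C := isCompact_iff_compactSpace.mp (hCc.isCompact)
  haveI : Nonempty C := ⟨⟨hne.some, subset_closure hne.some_mem⟩⟩
  have hcover : (⋃ k, ((fun z : C => (z : Z)) ⁻¹' F k)) = univ := by
    ext z; simp only [mem_iUnion, mem_univ, iff_true, mem_preimage]
    have : (z : Z) ∈ ⋃ k, F k := by rw [hcov]; trivial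
    simpa using this
  obtain ⟨k, hk⟩ : ∃ k, (interior ((fun z : C => (z : Z)) ⁻¹' F k)).Nonempty := by
    by_contra h
    push_neg at h
    obtain ⟨k, hk⟩ := nonempty_interior_of_iUnion_of_closed
      (fun k => (hF k).preimage continuous_subtype_val) hcover
    rw [h k] at hk
    exact hk.ne_empty rfl
  obtain ⟨z0, hz0⟩ := hk
  obtain ⟨O, hOopen, hOsub, hz0O⟩ : ∃ O : Set Z, IsOpen O ∧ (fun z : C => (z : Z)) ⁻¹' O ⊆
      (fun z : C => (z : Z)) ⁻¹' F k ∧ z0 ∈ (fun z : C => (z : Z)) ⁻¹' O := by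
    have h1 : IsOpen (interior ((fun z : C => (z : Z)) ⁻¹' F k)) := isOpen_interior
    rw [isOpen_induced_iff] at h1
    obtain ⟨O, hO, hOeq⟩ := h1
    exact ⟨O, hO, by rw [hOeq]; exact interior_subset, by rw [hOeq]; exact hz0⟩
  refine ⟨O, k, hOopen, ?_, ?_⟩
  · have hz0C : (z0 : Z) ∈ closure W₁ := z0.2
    obtain ⟨w, hwO, hwW⟩ := (mem_closure_iff.mp hz0C) O hOopen hz0O
    exact ⟨w, hwO, hwW⟩
  · intro x hx
    have hxC : x ∈ C := subset_closure hx.2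
    exact hOsub (a := ⟨x, hxC⟩) hx.1


lemma exists_continuity_point {X : Type*} [NormedAddCommGroup X] [NormedSpace ℝ X]
    (M : Set (WeakDual ℝ X)) (hMcpt : IsCompact M) (hMne : M.Nonempty)
    (hsep : TopologicalSpace.IsSeparable (WeakDual.toStrongDual '' M)) :
    ∃ z ∈ M, ∀ ε : ℝ, 0 < ε → ∃ V : Set (WeakDual ℝ X), IsOpen V ∧ z ∈ V ∧
      ∀ y ∈ V ∩ M, ‖WeakDual.toStrongDual y - WeakDual.toStrongDual z‖ ≤ ε := by
  classical
  obtain ⟨c, hcc, hcsub⟩ := hsep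
  have hcne : c.Nonempty := by
    rcases c.eq_empty_or_nonempty with rfl | h
    · exfalso
      obtain ⟨m, hm⟩ := hMne
      have : WeakDual.toStrongDual m ∈ closure (∅ : Set (StrongDual ℝ X)) := hcsub ⟨m, hm, rfl⟩
      simpa using this
    · exact h
  obtain ⟨d, hd⟩ := hcc.exists_eq_range hcne
  haveI : CompactSpace M := isCompact_iff_compactSpace.mp hMcpt
  haveI : Nonempty M := ⟨⟨hMne.some, hMne.some_mem⟩⟩
  -- the closed "balls" in the subtype
  have hFclosed : ∀ (k : ℕ) (ρ : ℝ), IsClosed {y : M |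
      ‖WeakDual.toStrongDual (y : WeakDual ℝ X) - d k‖ ≤ ρ} := by
    intro k ρ
    have h0 : IsClosed {y : WeakDual ℝ X | ‖WeakDual.toStrongDual y - d k‖ ≤ ρ} := by
      have h := WeakDual.isClosed_closedBall (d k) ρ (E := X) (𝕜 := ℝ)
      convert h using 1
      try (ext y; simp [Metric.mem_closedBall, dist_eq_norm])
    exact h0.preimage continuous_subtype_val
  have hFcov : ∀ ρ : ℝ, 0 < ρ → (⋃ k, {y : M |
      ‖WeakDual.toStrongDual (y : WeakDual ℝ X) - d k‖ ≤ ρ}) = univ := by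
    intro ρ hρ
    ext y; simp only [mem_iUnion, mem_univ, iff_true, mem_setOf_eq]
    have : WeakDual.toStrongDual (y : WeakDual ℝ X) ∈ closure c := hcsub ⟨y, y.2, rfl⟩
    obtain ⟨b, hbc, hblt⟩ := Metric.mem_closure_iff.mp this ρ hρ
    obtain ⟨k, rfl⟩ : ∃ k, d k = b := by
      rw [hd] at hbc; exact hbc
    exact ⟨k, by rw [← dist_eq_norm]; exact hblt.le⟩
  -- the dense open sets
  set Oe : ℝ → Set M := fun ε => ⋃₀ {U : Set M | IsOpen U ∧ ∀ y ∈ U, ∀ y' ∈ U,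
      ‖WeakDual.toStrongDual (y : WeakDual ℝ X) - WeakDual.toStrongDual (y' : WeakDual ℝ X)‖ ≤ ε}
      with hOe
  have hOopen : ∀ ε, IsOpen (Oe ε) := fun ε => isOpen_sUnion (fun U hU => hU.1)
  have hOdense : ∀ ε : ℝ, 0 < ε → Dense (Oe ε) := by
    intro ε hε
    rw [dense_iff_inter_open]
    intro W₁ hW₁ hW₁ne
    obtain ⟨U, k, hUopen, hUne, hUsub⟩ := frag_aux _ (fun k => hFclosed k (ε/4))
      (hFcov (ε/4) (by linarith)) W₁ hW₁ hW₁ne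
    obtain ⟨y0, hy0⟩ := hUne
    refine ⟨y0, ⟨hy0.2, ?_⟩⟩
    refine mem_sUnion.mpr ⟨U ∩ W₁, ⟨hUopen.inter hW₁, ?_⟩, hy0⟩
    intro y hy y' hy'
    have h1 := hUsub hy
    have h2 := hUsub hy'
    calc ‖WeakDual.toStrongDual (y : WeakDual ℝ X) - WeakDual.toStrongDual (y' : WeakDual ℝ X)‖
        ≤ ‖WeakDual.toStrongDual (y : WeakDual ℝ X) - d k‖ +
          ‖d k - WeakDual.toStrongDual (y' : WeakDual ℝ X)‖ := by
          have := norm_sub_le_norm_sub_add_norm_sub (WeakDual.toStrongDual (y : WeakDual ℝ X))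
            (d k) (WeakDual.toStrongDual (y' : WeakDual ℝ X))
          exact this
      _ ≤ ε/4 + ε/4 := by
          refine add_le_add h1 ?_
          rw [norm_sub_rev]; exact h2
      _ ≤ ε := by linarith
  -- Baire
  have hdense : Dense (⋂ n : ℕ, Oe (1/(n+1))) := by
    refine dense_iInter_of_isOpen (fun n => hOopen _) (fun n => hOdense _ ?_)
    positivity
  obtain ⟨z, hz⟩ := hdense.nonempty
  refine ⟨(z : WeakDual ℝ X), z.2, ?_⟩
  intro ε hε
  obtain ⟨n, hn⟩ := exists_nat_one_div_lt hε
  have hzn : z ∈ Oe (1/(n+1)) := by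
    have := mem_iInter.mp hz n
    exact this
  obtain ⟨U, ⟨hUopen, hUprop⟩, hzU⟩ := mem_sUnion.mp hzn
  obtain ⟨V, hVopen, hVeq⟩ := isOpen_induced_iff.mp hUopen
  have hzV : (z : WeakDual ℝ X) ∈ V := by
    rw [← hVeq] at hzU; exact hzU
  refine ⟨V, hVopen, hzV, ?_⟩
  intro y hy
  have hyU : (⟨y, hy.2⟩ : M) ∈ U := by
    rw [← hVeq]; exact hy.1
  have hb := hUprop _ hyU _ hzU
  calc ‖WeakDual.toStrongDual y - WeakDual.toStrongDual (z : WeakDual ℝ X)‖ ≤ 1/(n+1) := hb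
    _ ≤ ε := by
      have h2 : (1:ℝ)/(n+1) < ε := by exact_mod_cast hn
      linarith


-- closed pair-distance sets in the weak-* topology
lemma isClosed_pairdist {X : Type*} [NormedAddCommGroup X] [NormedSpace ℝ X] (c : ℝ) :
    IsClosed {p : WeakDual ℝ X × WeakDual ℝ X |
      ‖WeakDual.toStrongDual p.1 - WeakDual.toStrongDual p.2‖ ≤ c} := by
  have h1 : Continuous fun p : WeakDual ℝ X × WeakDual ℝ X => p.1 - p.2 := continuous_sub
  have h2 := WeakDual.isClosed_closedBall (0 : StrongDual ℝ X) c (E := X) (𝕜 := ℝ)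
  have h3 := h2.preimage h1
  convert h3 using 1
  ext p
  simp [Metric.mem_closedBall, dist_eq_norm, map_sub]

lemma isClosed_balldist {X : Type*} [NormedAddCommGroup X] [NormedSpace ℝ X]
    (v : StrongDual ℝ X) (c : ℝ) :
    IsClosed {x : WeakDual ℝ X | ‖WeakDual.toStrongDual x - v‖ ≤ c} := by
  simpa [Set.preimage, Metric.mem_closedBall, dist_eq_norm] using
    WeakDual.isClosed_closedBall v c (E := X) (𝕜 := ℝ)

-- chain intersections
lemma chain_sInter {W : Type*} [TopologicalSpace W] [T2Space W] (c : Set (Set W))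
    (hchain : IsChain (· ⊆ ·) c) (hcne : c.Nonempty)
    (hne : ∀ A ∈ c, A.Nonempty) (hcpt : ∀ A ∈ c, IsCompact A) :
    (⋂₀ c).Nonempty ∧ IsCompact (⋂₀ c) := by
  haveI : Nonempty c := hcne.coe_sort
  have hclosed : ∀ A ∈ c, IsClosed A := fun A hA => (hcpt A hA).isClosed
  have h1 : (⋂₀ c).Nonempty := by
    rw [Set.sInter_eq_iInter]
    exact IsCompact.nonempty_iInter_of_directed_nonempty_isCompact_isClosed _
      (DirectedOn.directed_val (IsChain.directedOn hchain.symm))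
      (fun i => hne i i.prop) (fun i => hcpt i i.prop) (fun i => hclosed i i.prop)
  refine ⟨h1, ?_⟩
  obtain ⟨A0, hA0⟩ := hcne
  exact (hcpt A0 hA0).of_isClosed_subset (isClosed_sInter (fun A hA => hclosed A hA))
    (Set.sInter_subset_of_mem hA0)



private def pw {S : Type*} [Semigroup S] (s : S) : ℕ → S
  | 0 => s
  | n+1 => s * pw s n

set_option maxHeartbeats 2000000 in
theorem weak_aux {X : Type*} [NormedAddCommGroup X] [NormedSpace ℝ X] [CompleteSpace X]
    (Q' : Set (WeakDual ℝ X)) (hne : Q'.Nonempty)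
    (hsep : TopologicalSpace.IsSeparable (WeakDual.toStrongDual '' Q'))
    (hcomp : IsCompact Q') (hconv : Convex ℝ Q')
    {S : Type*} [Semigroup S] (A : S → WeakDual ℝ X → WeakDual ℝ X)
    (hmaps : ∀ s, Set.MapsTo (A s) Q' Q')
    (hactm : ∀ s t, ∀ x ∈ Q', A (s*t) x = A s (A t x))
    (hcont : ∀ s, ContinuousOn (A s) Q')
    (hnonexp : ∀ s, ∀ x ∈ Q', ∀ y ∈ Q',
      ‖WeakDual.toStrongDual (A s x) - WeakDual.toStrongDual (A s y)‖ ≤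
        ‖WeakDual.toStrongDual x - WeakDual.toStrongDual y‖)
    (hdistal : ∀ x ∈ Q', ∀ y ∈ Q', x ≠ y → ∃ δ > 0, ∀ s,
      δ ≤ ‖WeakDual.toStrongDual (A s x) - WeakDual.toStrongDual (A s y)‖) :
    ∃ x ∈ Q', ∀ s, A s x = x := by
  classical
  set nd : WeakDual ℝ X → StrongDual ℝ X := fun x => WeakDual.toStrongDual x with hnd
  -- Step 1 : Zorn, minimal compact convex invariant K
  obtain ⟨K, hKQ, hKne, hKcpt, hKconv, hKinv, hKmin⟩ :
      ∃ K ⊆ Q', K.Nonempty ∧ IsCompact K ∧ Convex ℝ K ∧ (∀ s, Set.MapsTo (A s) K K) ∧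
        (∀ B ⊆ K, B.Nonempty → IsCompact B → Convex ℝ B → (∀ s, Set.MapsTo (A s) B B) →
          B = K) := by
    set 𝒮 : Set (Set (WeakDual ℝ X)) := {B | B ⊆ Q' ∧ B.Nonempty ∧ IsCompact B ∧
      Convex ℝ B ∧ ∀ s, Set.MapsTo (A s) B B} with h𝒮
    have hQ𝒮 : Q' ∈ 𝒮 := ⟨subset_rfl, hne, hcomp, hconv, hmaps⟩
    have hzorn : ∀ c ⊆ 𝒮, IsChain (· ⊆ ·) c → c.Nonempty → ∃ lb ∈ 𝒮, ∀ B ∈ c, lb ⊆ B := by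
      intro c hc hchain hcne
      have h1 := chain_sInter c hchain hcne (fun B hB => (hc hB).2.1)
        (fun B hB => (hc hB).2.2.1)
      obtain ⟨B0, hB0⟩ := hcne
      refine ⟨⋂₀ c, ⟨?_, h1.1, h1.2, ?_, ?_⟩, fun B hB => Set.sInter_subset_of_mem hB⟩
      · exact (Set.sInter_subset_of_mem hB0).trans (hc hB0).1
      · exact convex_sInter (fun B hB => (hc hB).2.2.2.1)
      · intro s x hx
        rw [Set.mem_sInter] at hx ⊢
        exact fun B hB => (hc hB).2.2.2.2 s (hx B hB)
    obtain ⟨K, hKsub, hKmin⟩ := zorn_superset_nonempty 𝒮 hzorn Q' hQ𝒮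
    obtain ⟨hK1, hK2, hK3, hK4, hK5⟩ := hKmin.prop
    exact ⟨K, hK1, hK2, hK3, hK4, hK5, fun B hBK hB1 hB2 hB3 hB4 =>
      hKmin.eq_of_subset ⟨hBK.trans hK1, hB1, hB2, hB3, hB4⟩ hBK⟩
  -- Step 2 : Zorn, minimal compact invariant N ⊆ K
  obtain ⟨N, hNK, hNne, hNcpt, hNinv, hNmin⟩ :
      ∃ N ⊆ K, N.Nonempty ∧ IsCompact N ∧ (∀ s, Set.MapsTo (A s) N N) ∧
        (∀ B ⊆ N, B.Nonempty → IsCompact B → (∀ s, Set.MapsTo (A s) B B) → B = N) := by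
    set 𝒮 : Set (Set (WeakDual ℝ X)) := {B | B ⊆ K ∧ B.Nonempty ∧ IsCompact B ∧
      ∀ s, Set.MapsTo (A s) B B} with h𝒮
    have hQ𝒮 : K ∈ 𝒮 := ⟨subset_rfl, hKne, hKcpt, hKinv⟩
    have hzorn : ∀ c ⊆ 𝒮, IsChain (· ⊆ ·) c → c.Nonempty → ∃ lb ∈ 𝒮, ∀ B ∈ c, lb ⊆ B := by
      intro c hc hchain hcne
      have h1 := chain_sInter c hchain hcne (fun B hB => (hc hB).2.1)
        (fun B hB => (hc hB).2.2.1)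
      obtain ⟨B0, hB0⟩ := hcne
      refine ⟨⋂₀ c, ⟨?_, h1.1, h1.2, ?_⟩, fun B hB => Set.sInter_subset_of_mem hB⟩
      · exact (Set.sInter_subset_of_mem hB0).trans (hc hB0).1
      · intro s x hx
        rw [Set.mem_sInter] at hx ⊢
        exact fun B hB => (hc hB).2.2.2 s (hx B hB)
    obtain ⟨N, hNsub, hNmin⟩ := zorn_superset_nonempty 𝒮 hzorn K hQ𝒮
    obtain ⟨hN1, hN2, hN3, hN4⟩ := hNmin.prop
    exact ⟨N, hN1, hN2, hN3, hN4, fun B hBN hB1 hB2 hB3 =>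
      hNmin.eq_of_subset ⟨hBN.trans hN1, hB1, hB2, hB3⟩ hBN⟩
  have hNQ : N ⊆ Q' := hNK.trans hKQ
  -- Step 3 : orbit density
  have horb : ∀ q ∈ N, N ⊆ closure ({y | ∃ t : S, y = A t q} ∪ {q}) := by
    intro q hq
    set orb : Set (WeakDual ℝ X) := {y | ∃ t : S, y = A t q} ∪ {q} with horbdef
    have horbN : orb ⊆ N := by
      rintro y (⟨t, rfl⟩ | rfl)
      · exact hNinv t hq
      · exact hq
    have hBsub : closure orb ⊆ N := by
      have := hNcpt.isClosed.closure_subset_iff.mpr horbN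
      exact this
    have hBcpt : IsCompact (closure orb) :=
      hNcpt.of_isClosed_subset isClosed_closure hBsub
    have hBinv : ∀ s, Set.MapsTo (A s) (closure orb) (closure orb) := by
      intro s
      have hc1 : ContinuousOn (A s) (closure orb) :=
        (hcont s).mono (hBsub.trans hNQ)
      intro x hx
      have h2 : A s x ∈ A s '' closure orb := Set.mem_image_of_mem _ hx
      have h3 : A s '' closure orb ⊆ closure (A s '' orb) := by
        exact ContinuousOn.image_closure hc1
      have h4 : A s '' orb ⊆ orb := by
        rintro y ⟨w, (⟨t, rfl⟩ | rfl), rfl⟩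
        · exact Or.inl ⟨s * t, (hactm s t q (hNQ hq)).symm⟩
        · exact Or.inl ⟨s, rfl⟩
      exact closure_mono h4 (h3 h2)
    have heq := hNmin (closure orb) hBsub ⟨q, subset_closure (Or.inr rfl)⟩ hBcpt hBinv
    exact heq.symm.subset
  -- Step 4 : continuity point
  obtain ⟨z, hzN, hzpt⟩ : ∃ z ∈ N, ∀ ε : ℝ, 0 < ε → ∃ V : Set (WeakDual ℝ X),
      IsOpen V ∧ z ∈ V ∧ ∀ y ∈ V ∩ N, ‖nd y - nd z‖ ≤ ε := by
    have hsepN : TopologicalSpace.IsSeparable (WeakDual.toStrongDual '' N) :=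
      hsep.mono (Set.image_mono hNQ)
    exact exists_continuity_point N hNcpt hNne hsepN
  -- Step 5 : each A s is a surjective isometry on N
  have hkey : ∀ s : S, (∀ x ∈ N, ∃ y ∈ N, A s y = x) ∧
      (∀ x ∈ N, ∀ y ∈ N, ‖nd (A s x) - nd (A s y)‖ = ‖nd x - nd y‖) := by
    intro s
    haveI hTcpt : CompactSpace N := isCompact_iff_compactSpace.mp hNcpt
    haveI hTne : Nonempty N := ⟨⟨hNne.some, hNne.some_mem⟩⟩
    letI : TopologicalSpace (Function.End N) := (Pi.topologicalSpace : TopologicalSpace (N → N))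
    haveI : CompactSpace (Function.End N) := inferInstanceAs (CompactSpace (N → N))
    haveI : T2Space (Function.End N) := inferInstanceAs (T2Space (N → N))
    have hrest : ∀ t : S, ∀ m : N, A t (m : WeakDual ℝ X) ∈ N := fun t m => hNinv t m.2
    set ff : S → Function.End N :=
      fun t => (fun m => (⟨A t (m : WeakDual ℝ X), hrest t m⟩ : N)) with hff
    have hfc : ∀ t : S, Continuous (ff t) := by
      intro t
      apply Continuous.subtype_mk
      exact ((hcont t).mono hNQ).comp_continuous continuous_subtype_val (fun m => m.2)
    set f : Function.End N := ff s with hfdef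
    -- iterates are nonexpansive
    have hiter_ne : ∀ (n : ℕ) (a b : N),
        ‖nd ((f^[n] a : N) : WeakDual ℝ X) - nd ((f^[n] b : N) : WeakDual ℝ X)‖ ≤
          ‖nd (a : WeakDual ℝ X) - nd (b : WeakDual ℝ X)‖ := by
      intro n
      induction n with
      | zero => intro a b; exact le_rfl
      | succ n ih =>
        intro a b
        rw [Function.iterate_succ_apply', Function.iterate_succ_apply']
        calc ‖nd ((f (f^[n] a) : N) : WeakDual ℝ X) - nd ((f (f^[n] b) : N) : WeakDual ℝ X)‖
            ≤ ‖nd ((f^[n] a : N) : WeakDual ℝ X) - nd ((f^[n] b : N) : WeakDual ℝ X)‖ := by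
              exact hnonexp s _ (hNQ (f^[n] a).2) _ (hNQ (f^[n] b).2)
          _ ≤ _ := ih a b
    -- iterates realize semigroup powers
    have hAiter : ∀ (n : ℕ) (m' : N),
        ((f^[n+1] m' : N) : WeakDual ℝ X) = A (pw s n) (m' : WeakDual ℝ X) := by
      intro n
      induction n with
      | zero => intro m'; rfl
      | succ n ih =>
        intro m'
        rw [Function.iterate_succ_apply']
        show A s ((f^[n+1] m' : N) : WeakDual ℝ X) = A (pw s (n+1)) (m' : WeakDual ℝ X)
        rw [ih m']
        exact (hactm s (pw s n) (m' : WeakDual ℝ X) (hNQ m'.2)).symm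
    -- the enveloping compact semigroup
    set R : Set (Function.End N) := Set.range (fun n : ℕ => f^[n+1]) with hR
    set AS : Set (Function.End N) := closure R with hAS
    have hAScl : IsClosed AS := isClosed_closure
    have hAScpt : IsCompact AS := hAScl.isCompact
    have hASne : AS.Nonempty := ⟨f^[0+1], subset_closure ⟨0, rfl⟩⟩
    have hcompcont : ∀ g : Function.End N, Continuous (fun h : Function.End N => h * g) := by
      intro g
      show Continuous (fun h : Function.End N => (h ∘ g : Function.End N))
      exact continuous_pi (fun m => continuous_apply (g m))
    have hmulmem : ∀ g ∈ AS, ∀ h ∈ AS, g * h ∈ AS := by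
      have step1 : ∀ (n : ℕ), ∀ h ∈ AS, (f^[n+1] ∘ h : Function.End N) ∈ AS := by
        intro n h hh
        have hfi : Continuous (f^[n+1]) := (hfc s).iterate (n+1)
        have hφ : Continuous (fun g : Function.End N => (f^[n+1] ∘ g : Function.End N)) :=
          continuous_pi (fun m => hfi.comp (continuous_apply m))
        have h1 : (f^[n+1] ∘ h : Function.End N) ∈
            closure ((fun g : Function.End N => (f^[n+1] ∘ g : Function.End N)) '' R) :=
          image_closure_subset_closure_image hφ ⟨h, hh, rfl⟩
        have h2 : (fun g : Function.End N => (f^[n+1] ∘ g : Function.End N)) '' R ⊆ R := by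
          rintro - ⟨-, ⟨m, rfl⟩, rfl⟩
          refine ⟨n + 1 + m, ?_⟩
          show f^[(n+1) + (m+1)] = (f^[n+1] ∘ f^[m+1] : Function.End N)
          exact Function.iterate_add f (n+1) (m+1)
        exact closure_mono h2 h1
      intro g hg h hh
      have h1 : (g ∘ h : Function.End N) ∈
          closure ((fun g' : Function.End N => (g' ∘ h : Function.End N)) '' R) := by
        have hψ : Continuous (fun g' : Function.End N => (g' ∘ h : Function.End N)) :=
          continuous_pi (fun m => continuous_apply (h m))
        exact image_closure_subset_closure_image hψ ⟨g, hg, rfl⟩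
      have h2 : (fun g' : Function.End N => (g' ∘ h : Function.End N)) '' R ⊆ AS := by
        rintro - ⟨-, ⟨n, rfl⟩, rfl⟩
        exact step1 n h hh
      have h3 := closure_mono h2 h1
      exact hAScl.closure_subset h3
    obtain ⟨u, huAS, huid⟩ :=
      exists_idempotent_in_compact_subsemigroup hcompcont AS hASne hAScpt hmulmem
    -- u is the identity
    have hufix : ∀ m : N, u m = m := by
      intro m
      by_contra hne2
      have hneq : ((u m : N) : WeakDual ℝ X) ≠ (m : WeakDual ℝ X) :=
        fun h => hne2 (Subtype.ext h)
      obtain ⟨δ, hδpos, hδ⟩ := hdistal _ (hNQ m.2) _ (hNQ (u m).2) hneq.symm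
      -- note : hδ : ∀ σ, δ ≤ ‖nd (A σ ↑m) - nd (A σ ↑(u m))‖
      obtain ⟨V, hVopen, hzV, hVprop⟩ := hzpt (δ/3) (by linarith)
      have hq2 : u (u m) = u m := congrFun huid m
      have hzcl : z ∈ closure ({y | ∃ t : S, y = A t ((u m : N) : WeakDual ℝ X)} ∪
          {((u m : N) : WeakDual ℝ X)}) := horb _ (u m).2 hzN
      obtain ⟨w, hwV, hworb⟩ := (mem_closure_iff.mp hzcl) V hVopen hzV
      set P : Set N := Subtype.val ⁻¹' V with hP
      have hPopen : IsOpen P := hVopen.preimage continuous_subtype_val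
      rcases hworb with ⟨t, hwt⟩ | hwq
      · -- case : A t (u m) ∈ V
        have hqW : ff t (u m) ∈ P := by
          show ((ff t (u m) : N) : WeakDual ℝ X) ∈ V
          show A t ((u m : N) : WeakDual ℝ X) ∈ V
          rw [← hwt]; exact hwV
        set W₀ : Set N := ff t ⁻¹' P with hW₀
        have hW₀open : IsOpen W₀ := hPopen.preimage (hfc t)
        set 𝒪 : Set (Function.End N) := ((fun g : Function.End N => g m) ⁻¹' W₀) ∩
            ((fun g : Function.End N => g (u m)) ⁻¹' W₀) with h𝒪def
        have h𝒪open : IsOpen 𝒪 := IsOpen.inter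
          (IsOpen.preimage (continuous_apply m) hW₀open)
          (IsOpen.preimage (continuous_apply (u m)) hW₀open)
        have hu𝒪 : u ∈ 𝒪 := by
          refine ⟨hqW, ?_⟩
          show u (u m) ∈ W₀
          rw [hq2]; exact hqW
        obtain ⟨g, hg𝒪, hgR⟩ := (mem_closure_iff.mp huAS) _ h𝒪open hu𝒪
        obtain ⟨n, rfl⟩ := hgR
        have ha : A t ((f^[n+1] m : N) : WeakDual ℝ X) ∈ V ∩ N := by
          exact ⟨hg𝒪.1, hrest t _⟩
        have hb : A t ((f^[n+1] (u m) : N) : WeakDual ℝ X) ∈ V ∩ N := by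
          exact ⟨hg𝒪.2, hrest t _⟩
        have e1 : A t ((f^[n+1] m : N) : WeakDual ℝ X) = A (t * pw s n) (m : WeakDual ℝ X) := by
          rw [hAiter n m]
          exact (hactm t (pw s n) _ (hNQ m.2)).symm
        have e2 : A t ((f^[n+1] (u m) : N) : WeakDual ℝ X) =
            A (t * pw s n) ((u m : N) : WeakDual ℝ X) := by
          rw [hAiter n (u m)]
          exact (hactm t (pw s n) _ (hNQ (u m).2)).symm
        have b1 := hVprop _ ha
        have b2 := hVprop _ hb
        have b3 : ‖nd (A (t * pw s n) (m : WeakDual ℝ X)) -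
            nd (A (t * pw s n) ((u m : N) : WeakDual ℝ X))‖ ≤ 2*(δ/3) := by
          rw [← e1, ← e2]
          calc ‖nd (A t ((f^[n+1] m : N) : WeakDual ℝ X)) -
              nd (A t ((f^[n+1] (u m) : N) : WeakDual ℝ X))‖
              ≤ ‖nd (A t ((f^[n+1] m : N) : WeakDual ℝ X)) - nd z‖ +
                ‖nd z - nd (A t ((f^[n+1] (u m) : N) : WeakDual ℝ X))‖ :=
                norm_sub_le_norm_sub_add_norm_sub _ _ _
            _ ≤ δ/3 + δ/3 := by
                refine add_le_add b1 ?_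
                rw [norm_sub_rev]; exact b2
            _ = 2*(δ/3) := by ring
        have := hδ (t * pw s n)
        linarith
      · -- case : u m ∈ V
        have hqP : (u m : N) ∈ P := by
          show ((u m : N) : WeakDual ℝ X) ∈ V
          rw [← hwq]; exact hwV
        set 𝒪 : Set (Function.End N) := ((fun g : Function.End N => g m) ⁻¹' P) ∩
            ((fun g : Function.End N => g (u m)) ⁻¹' P) with h𝒪def
        have h𝒪open : IsOpen 𝒪 := IsOpen.inter
          (IsOpen.preimage (continuous_apply m) hPopen)
          (IsOpen.preimage (continuous_apply (u m)) hPopen)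
        have hu𝒪 : u ∈ 𝒪 := by
          refine ⟨hqP, ?_⟩
          show u (u m) ∈ P
          rw [hq2]; exact hqP
        obtain ⟨g, hg𝒪, hgR⟩ := (mem_closure_iff.mp huAS) _ h𝒪open hu𝒪
        obtain ⟨n, rfl⟩ := hgR
        have ha : ((f^[n+1] m : N) : WeakDual ℝ X) ∈ V ∩ N := ⟨hg𝒪.1, (f^[n+1] m).2⟩
        have hb : ((f^[n+1] (u m) : N) : WeakDual ℝ X) ∈ V ∩ N := ⟨hg𝒪.2, (f^[n+1] (u m)).2⟩
        have b1 := hVprop _ ha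
        have b2 := hVprop _ hb
        have b3 : ‖nd (A (pw s n) (m : WeakDual ℝ X)) -
            nd (A (pw s n) ((u m : N) : WeakDual ℝ X))‖ ≤ 2*(δ/3) := by
          rw [← hAiter n m, ← hAiter n (u m)]
          calc ‖nd ((f^[n+1] m : N) : WeakDual ℝ X) - nd ((f^[n+1] (u m) : N) : WeakDual ℝ X)‖
              ≤ ‖nd ((f^[n+1] m : N) : WeakDual ℝ X) - nd z‖ +
                ‖nd z - nd ((f^[n+1] (u m) : N) : WeakDual ℝ X)‖ :=
                norm_sub_le_norm_sub_add_norm_sub _ _ _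
            _ ≤ δ/3 + δ/3 := by
                refine add_le_add b1 ?_
                rw [norm_sub_rev]; exact b2
            _ = 2*(δ/3) := by ring
        have := hδ (pw s n)
        linarith
    -- hence the identity lies in AS
    have hidAS : (1 : Function.End N) ∈ AS := by
      have hu1 : u = 1 := funext hufix
      rwa [hu1] at huAS
    constructor
    · -- surjectivity
      intro x hx
      have hxr : (⟨x, hx⟩ : N) ∈ Set.range f := by
        by_contra hxr
        have hO : IsOpen ((Set.range f)ᶜ) := (isCompact_range (hfc s)).isClosed.isOpen_compl
        have h𝒪 : IsOpen ((fun g : Function.End N => g ⟨x, hx⟩) ⁻¹' (Set.range f)ᶜ) :=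
          IsOpen.preimage (continuous_apply _) hO
        have h1 : (1 : Function.End N) ∈
            ((fun g : Function.End N => g ⟨x, hx⟩) ⁻¹' (Set.range f)ᶜ) := hxr
        obtain ⟨g, hg, hgR⟩ := (mem_closure_iff.mp hidAS) _ h𝒪 h1
        obtain ⟨n, rfl⟩ := hgR
        exact hg ⟨f^[n] ⟨x, hx⟩, (Function.iterate_succ_apply' f n _).symm⟩
      obtain ⟨y, hy⟩ := hxr
      refine ⟨(y : WeakDual ℝ X), y.2, ?_⟩
      have := congrArg (Subtype.val) hy
      exact this
    · -- isometry
      intro x hx y hy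
      refine le_antisymm (hnonexp s x (hNQ hx) y (hNQ hy)) ?_
      set cval : ℝ := ‖nd (A s x) - nd (A s y)‖ with hcval
      have hZcl : IsClosed {p : WeakDual ℝ X × WeakDual ℝ X | ‖nd p.1 - nd p.2‖ ≤ cval} :=
        isClosed_pairdist cval
      set θ : Function.End N → WeakDual ℝ X × WeakDual ℝ X :=
        fun g => (((g ⟨x, hx⟩ : N) : WeakDual ℝ X), ((g ⟨y, hy⟩ : N) : WeakDual ℝ X)) with hθ
      have hθc : Continuous θ :=
        (continuous_subtype_val.comp (continuous_apply _)).prodMk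
          (continuous_subtype_val.comp (continuous_apply _))
      have hθR : θ '' R ⊆ {p : WeakDual ℝ X × WeakDual ℝ X | ‖nd p.1 - nd p.2‖ ≤ cval} := by
        rintro - ⟨-, ⟨n, rfl⟩, rfl⟩
        show ‖nd ((f^[n+1] ⟨x, hx⟩ : N) : WeakDual ℝ X) -
            nd ((f^[n+1] ⟨y, hy⟩ : N) : WeakDual ℝ X)‖ ≤ cval
        rw [Function.iterate_succ_apply, Function.iterate_succ_apply]
        exact hiter_ne n (f ⟨x, hx⟩) (f ⟨y, hy⟩)
      have h1 : θ 1 ∈ closure (θ '' R) :=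
        image_closure_subset_closure_image hθc ⟨1, hidAS, rfl⟩
      have h2 : θ 1 ∈ {p : WeakDual ℝ X × WeakDual ℝ X | ‖nd p.1 - nd p.2‖ ≤ cval} := by
        have h3 := closure_mono hθR h1
        rwa [hZcl.closure_eq] at h3
      exact h2
  have hsurj : ∀ s : S, ∀ x ∈ N, ∃ y ∈ N, A s y = x := fun s => (hkey s).1
  have hiso : ∀ s : S, ∀ x ∈ N, ∀ y ∈ N, ‖nd (A s x) - nd (A s y)‖ = ‖nd x - nd y‖ :=
    fun s => (hkey s).2
  -- Step 6 : total boundedness of N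
  have htb : ∀ ε : ℝ, 0 < ε → ∃ Y : Finset (WeakDual ℝ X), (↑Y : Set (WeakDual ℝ X)) ⊆ N ∧
      Y.Nonempty ∧ ∀ x ∈ N, ∃ y ∈ Y, ‖nd x - nd y‖ ≤ ε := by
    intro ε hε
    obtain ⟨V, hVopen, hzV, hVprop⟩ := hzpt (ε/2) (by linarith)
    haveI hTcpt : CompactSpace N := isCompact_iff_compactSpace.mp hNcpt
    have hrest : ∀ t : S, ∀ m : N, A t (m : WeakDual ℝ X) ∈ N := fun t m => hNinv t m.2
    set gmap : S → N → N := fun t m => (⟨A t (m : WeakDual ℝ X), hrest t m⟩ : N) with hgmap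
    have hgc : ∀ t : S, Continuous (gmap t) := by
      intro t
      apply Continuous.subtype_mk
      exact ((hcont t).mono hNQ).comp_continuous continuous_subtype_val (fun m => m.2)
    set U : Option S → Set N := fun i => Option.elim i (Subtype.val ⁻¹' V)
      (fun t => gmap t ⁻¹' (Subtype.val ⁻¹' V)) with hU
    have hUopen : ∀ i, IsOpen (U i) := by
      rintro (_ | t)
      · exact hVopen.preimage continuous_subtype_val
      · exact (hVopen.preimage continuous_subtype_val).preimage (hgc t)
    have hUcov : (Set.univ : Set N) ⊆ ⋃ i, U i := by
      intro m _
      have hzcl : z ∈ closure ({y | ∃ t : S, y = A t (m : WeakDual ℝ X)} ∪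
          {(m : WeakDual ℝ X)}) := horb _ m.2 hzN
      obtain ⟨w, hwV, hworb⟩ := (mem_closure_iff.mp hzcl) V hVopen hzV
      rcases hworb with ⟨t, hwt⟩ | hwq
      · refine Set.mem_iUnion.mpr ⟨some t, ?_⟩
        show gmap t m ∈ Subtype.val ⁻¹' V
        show A t (m : WeakDual ℝ X) ∈ V
        rw [← hwt]; exact hwV
      · refine Set.mem_iUnion.mpr ⟨none, ?_⟩
        show (m : WeakDual ℝ X) ∈ V
        rw [← hwq]; exact hwV
    obtain ⟨T, hT⟩ := isCompact_univ.elim_finite_subcover U hUopen hUcov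
    classical
    set rep : Option S → N := fun i => if h : (U i).Nonempty then h.some
      else ⟨hNne.some, hNne.some_mem⟩ with hrep
    set Y : Finset (WeakDual ℝ X) := T.image (fun i => ((rep i : N) : WeakDual ℝ X)) with hY
    have key : ∀ x ∈ N, ∃ y ∈ Y, ‖nd x - nd y‖ ≤ ε := by
      intro x hx
      have : (⟨x, hx⟩ : N) ∈ ⋃ i ∈ T, U i := hT (Set.mem_univ _)
      obtain ⟨i, hiT, hmi⟩ := Set.mem_iUnion₂.mp this
      have hUine : (U i).Nonempty := ⟨_, hmi⟩
      have hrepUi : rep i ∈ U i := by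
        rw [hrep]; simp only [hUine, dif_pos]; exact hUine.some_mem
      refine ⟨((rep i : N) : WeakDual ℝ X), Finset.mem_image_of_mem _ hiT, ?_⟩
      rcases i with (_ | t)
      · -- both in V
        have h1 : ‖nd x - nd z‖ ≤ ε/2 := hVprop _ ⟨hmi, hx⟩
        have h2 : ‖nd ((rep none : N) : WeakDual ℝ X) - nd z‖ ≤ ε/2 :=
          hVprop _ ⟨hrepUi, (rep none).2⟩
        calc ‖nd x - nd ((rep none : N) : WeakDual ℝ X)‖
            ≤ ‖nd x - nd z‖ + ‖nd z - nd ((rep none : N) : WeakDual ℝ X)‖ :=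
              norm_sub_le_norm_sub_add_norm_sub _ _ _
          _ ≤ ε/2 + ε/2 := add_le_add h1 (by rw [norm_sub_rev]; exact h2)
          _ = ε := by ring
      · -- images under t in V, use isometry
        have h1 : ‖nd (A t x) - nd z‖ ≤ ε/2 := hVprop _ ⟨hmi, hrest t ⟨x, hx⟩⟩
        have h2 : ‖nd (A t ((rep (some t) : N) : WeakDual ℝ X)) - nd z‖ ≤ ε/2 :=
          hVprop _ ⟨hrepUi, hrest t _⟩
        have h3 : ‖nd (A t x) - nd (A t ((rep (some t) : N) : WeakDual ℝ X))‖ ≤ ε := by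
          calc ‖nd (A t x) - nd (A t ((rep (some t) : N) : WeakDual ℝ X))‖
              ≤ ‖nd (A t x) - nd z‖ +
                ‖nd z - nd (A t ((rep (some t) : N) : WeakDual ℝ X))‖ :=
                norm_sub_le_norm_sub_add_norm_sub _ _ _
            _ ≤ ε/2 + ε/2 := add_le_add h1 (by rw [norm_sub_rev]; exact h2)
            _ = ε := by ring
        rw [hiso t x hx _ (rep (some t)).2] at h3
        exact h3
    refine ⟨Y, ?_, ?_, key⟩
    · intro y hy
      simp only [hY, Finset.coe_image, Set.mem_image] at hy
      obtain ⟨i, _, rfl⟩ := hy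
      exact (rep i).2
    · obtain ⟨x, hx⟩ := hNne
      obtain ⟨y, hy, _⟩ := key x hx
      exact ⟨y, hy⟩
  -- Step 7 : Chebyshev radius argument
  set Cstar : ℝ → Set (WeakDual ℝ X) :=
    fun c => {x | x ∈ K ∧ ∀ m ∈ N, ‖nd x - nd m‖ ≤ c} with hCdef
  have hCclosed : ∀ c, IsClosed (Cstar c) := by
    intro c
    have hEq : Cstar c = K ∩ ⋂ (m : WeakDual ℝ X) (_ : m ∈ N),
        {x : WeakDual ℝ X | ‖WeakDual.toStrongDual x - nd m‖ ≤ c} := by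
      ext x
      simp only [hCdef, Set.mem_setOf_eq, Set.mem_inter_iff, Set.mem_iInter]
      exact Iff.rfl
    rw [hEq]
    exact hKcpt.isClosed.inter (isClosed_iInter
      (fun m => isClosed_iInter (fun _ => isClosed_balldist (nd m) c)))
  have hCcpt : ∀ c, IsCompact (Cstar c) :=
    fun c => hKcpt.of_isClosed_subset (hCclosed c) (fun x hx => hx.1)
  have hCconv : ∀ c, Convex ℝ (Cstar c) := by
    intro c x hx y hy a b ha hb hab
    refine ⟨hKconv hx.1 hy.1 ha hb hab, ?_⟩
    intro m hm
    have hndcomb : nd (a • x + b • y) - nd m =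
        a • (nd x - nd m) + b • (nd y - nd m) := by
      have e1 : nd (a • x + b • y) = a • nd x + b • nd y := by
        simp only [hnd]
        rw [map_add, map_smul, map_smul]
      rw [e1]
      have hcombo : a • nd m + b • nd m = nd m := Convex.combo_self hab _
      calc a • nd x + b • nd y - nd m
          = a • nd x + b • nd y - (a • nd m + b • nd m) := by rw [hcombo]
        _ = a • (nd x - nd m) + b • (nd y - nd m) := by
            rw [smul_sub, smul_sub]; abel
    calc ‖nd (a • x + b • y) - nd m‖ = ‖a • (nd x - nd m) + b • (nd y - nd m)‖ := by
          rw [hndcomb]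
      _ ≤ ‖a • (nd x - nd m)‖ + ‖b • (nd y - nd m)‖ := norm_add_le _ _
      _ = a * ‖nd x - nd m‖ + b * ‖nd y - nd m‖ := by
          rw [norm_smul, norm_smul, Real.norm_of_nonneg ha, Real.norm_of_nonneg hb]
      _ ≤ a * c + b * c := by
          have h1 := hx.2 m hm
          have h2 := hy.2 m hm
          have : 0 ≤ a := ha
          have : 0 ≤ b := hb
          nlinarith
      _ = c := by rw [← add_mul, hab, one_mul]
  have hCinv : ∀ c, ∀ s : S, Set.MapsTo (A s) (Cstar c) (Cstar c) := by
    intro c s x hx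
    refine ⟨hKinv s hx.1, ?_⟩
    intro m hm
    obtain ⟨m', hm', hm'eq⟩ := hsurj s m hm
    rw [← hm'eq]
    calc ‖nd (A s x) - nd (A s m')‖ ≤ ‖nd x - nd m'‖ :=
          hnonexp s x (hKQ hx.1) m' (hNQ hm')
      _ ≤ c := hx.2 m' hm'
  set SetR : Set ℝ := {c | 0 ≤ c ∧ (Cstar c).Nonempty} with hSetR
  have hSetRne : SetR.Nonempty := by
    obtain ⟨Y, hYN, hYne, hYnet⟩ := htb 1 one_pos
    obtain ⟨m₀, hm₀⟩ := hNne
    set B : ℝ := 1 + (Y.image (fun y => ‖nd m₀ - nd y‖)).max' (hYne.image _) with hB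
    have hBbound : ∀ m ∈ N, ‖nd m₀ - nd m‖ ≤ B := by
      intro m hm
      obtain ⟨y, hy, hyb⟩ := hYnet m hm
      have hmax : ‖nd m₀ - nd y‖ ≤ (Y.image (fun y => ‖nd m₀ - nd y‖)).max' (hYne.image _) :=
        Finset.le_max' (Y.image (fun y => ‖nd m₀ - nd y‖)) _
          (Finset.mem_image_of_mem (fun y => ‖nd m₀ - nd y‖) hy)
      calc ‖nd m₀ - nd m‖ ≤ ‖nd m₀ - nd y‖ + ‖nd y - nd m‖ :=
            norm_sub_le_norm_sub_add_norm_sub _ _ _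
        _ ≤ (Y.image (fun y => ‖nd m₀ - nd y‖)).max' (hYne.image _) + 1 := by
            refine add_le_add hmax ?_
            rw [norm_sub_rev]; exact hyb
        _ = B := by rw [hB]; ring
    have hB0 : 0 ≤ B := le_trans (norm_nonneg _) (hBbound m₀ hm₀)
    exact ⟨B, hB0, ⟨m₀, hNK hm₀, hBbound⟩⟩
  have hSetRbdd : BddBelow SetR := ⟨0, fun c hc => hc.1⟩
  set r : ℝ := sInf SetR with hrdef
  have hr0 : 0 ≤ r := le_csInf hSetRne (fun c hc => hc.1)
  have hmono : ∀ c c', c ≤ c' → Cstar c ⊆ Cstar c' :=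
    fun c c' hcc x hx => ⟨hx.1, fun m hm => le_trans (hx.2 m hm) hcc⟩
  have hCrne : (Cstar r).Nonempty := by
    have hseq : ∀ n : ℕ, (Cstar (r + 1/(n+1))).Nonempty := by
      intro n
      have h1 : r < r + 1/(n+1) := by
        have : (0:ℝ) < 1/(n+1) := by positivity
        linarith
      obtain ⟨c, hcR, hcr⟩ := exists_lt_of_csInf_lt hSetRne h1
      exact (hcR.2).mono (hmono c _ hcr.le)
    have hdir : Directed (fun (x1 x2 : Set (WeakDual ℝ X)) => x1 ⊇ x2)
        (fun n : ℕ => Cstar (r + 1/(n+1))) := by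
      intro a b
      have hle : ∀ x y : ℕ, x ≤ y → (1:ℝ)/(y+1) ≤ 1/(x+1) := by
        intro x y hxy
        have hc : (x:ℝ) ≤ (y:ℝ) := Nat.cast_le.mpr hxy
        apply one_div_le_one_div_of_le
        · positivity
        · linarith
      exact ⟨max a b, hmono _ _ (by linarith [hle a (max a b) (le_max_left a b)]),
        hmono _ _ (by linarith [hle b (max a b) (le_max_right a b)])⟩
    obtain ⟨x, hx⟩ := IsCompact.nonempty_iInter_of_directed_nonempty_isCompact_isClosed
      (fun n : ℕ => Cstar (r + 1/(n+1))) hdir hseq (fun n => hCcpt _) (fun n => hCclosed _)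
    rw [Set.mem_iInter] at hx
    refine ⟨x, (hx 0).1, ?_⟩
    intro m hm
    refine le_of_forall_pos_le_add ?_
    intro ε hε
    obtain ⟨n, hn⟩ := exists_nat_one_div_lt hε
    calc ‖nd x - nd m‖ ≤ r + 1/(n+1) := (hx n).2 m hm
      _ ≤ r + ε := by
          have : (1:ℝ)/(n+1) < ε := by exact_mod_cast hn
          linarith
  have hCK : Cstar r = K :=
    hKmin (Cstar r) (fun x hx => hx.1) hCrne (hCcpt r) (hCconv r) (hCinv r)
  have hdiamN : ∀ m ∈ N, ∀ m' ∈ N, ‖nd m - nd m'‖ ≤ r := by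
    intro m hm m' hm'
    have : m ∈ Cstar r := by rw [hCK]; exact hNK hm
    exact this.2 m' hm'
  -- r must vanish
  have hrle : r ≤ 0 := by
    by_contra hrpos
    push_neg at hrpos
    obtain ⟨Y, hYN, hYne, hYnet⟩ := htb (r/8) (by linarith)
    set n : ℕ := Y.card with hncard
    have hn0 : 0 < n := Finset.card_pos.mpr hYne
    have hnR : (0:ℝ) < n := by exact_mod_cast hn0
    set xbar : WeakDual ℝ X := ∑ y ∈ Y, (n : ℝ)⁻¹ • y with hxbar
    have hwsum : ∑ _y ∈ Y, (n : ℝ)⁻¹ = 1 := by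
      rw [Finset.sum_const, ← hncard, nsmul_eq_mul, mul_inv_cancel₀ (ne_of_gt hnR)]
    have hxbarK : xbar ∈ K := by
      refine hKconv.sum_mem (fun y _ => inv_nonneg.mpr (le_of_lt hnR)) hwsum
        (fun y hy => hNK (hYN hy))
    set c₁ : ℝ := r - (7/8)*(n:ℝ)⁻¹*r with hc₁
    have hc₁lt : c₁ < r := by
      have h1 : 0 < (7/8)*(n:ℝ)⁻¹*r := by positivity
      rw [hc₁]; linarith
    have hc₁0 : 0 ≤ c₁ := by
      have h2 : (n:ℝ)⁻¹ ≤ 1 := by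
        rw [inv_le_one_iff₀]
        right
        exact_mod_cast hn0
      have h3 : (7/8)*(n:ℝ)⁻¹*r ≤ (7/8)*r := by
        have : (7/8)*(n:ℝ)⁻¹ ≤ 7/8 := by nlinarith
        nlinarith
      rw [hc₁]; linarith
    have hbound : ∀ m ∈ N, ‖nd xbar - nd m‖ ≤ c₁ := by
      intro m hm
      obtain ⟨y₀, hy₀Y, hy₀b⟩ := hYnet m hm
      have hndsum : nd xbar = ∑ y ∈ Y, (n : ℝ)⁻¹ • nd y := by
        simp only [hnd]
        rw [hxbar, map_sum]
        simp only [map_smul]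
      have hsplit : nd xbar - nd m = ∑ y ∈ Y, (n : ℝ)⁻¹ • (nd y - nd m) := by
        rw [hndsum]
        have h4 : ∑ _y ∈ Y, (n : ℝ)⁻¹ • nd m = nd m := by
          rw [Finset.sum_const, ← hncard]
          rw [← Nat.cast_smul_eq_nsmul ℝ, smul_smul, mul_inv_cancel₀ (ne_of_gt hnR), one_smul]
        calc (∑ y ∈ Y, (n : ℝ)⁻¹ • nd y) - nd m
            = (∑ y ∈ Y, (n : ℝ)⁻¹ • nd y) - ∑ _y ∈ Y, (n : ℝ)⁻¹ • nd m := by rw [h4]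
          _ = ∑ y ∈ Y, ((n : ℝ)⁻¹ • nd y - (n : ℝ)⁻¹ • nd m) := by
              rw [Finset.sum_sub_distrib]
          _ = ∑ y ∈ Y, (n : ℝ)⁻¹ • (nd y - nd m) := by
              refine Finset.sum_congr rfl (fun y _ => ?_)
              rw [smul_sub]
      have hsum_bound : ∑ y ∈ Y, ‖nd y - nd m‖ ≤ r/8 + ((n:ℝ) - 1) * r := by
        have hterm : ‖nd y₀ - nd m‖ ≤ r/8 := by rw [norm_sub_rev]; exact hy₀b
        have hrest2 : ∑ y ∈ Y.erase y₀, ‖nd y - nd m‖ ≤ ((Y.erase y₀).card : ℝ) * r := by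
          have := Finset.sum_le_card_nsmul (Y.erase y₀) (fun y => ‖nd y - nd m‖) r
            (fun y hy => hdiamN y (hYN (Finset.mem_of_mem_erase hy)) m hm)
          rw [nsmul_eq_mul] at this
          exact this
        have hcard : ((Y.erase y₀).card : ℝ) = (n:ℝ) - 1 := by
          rw [Finset.card_erase_of_mem hy₀Y, ← hncard]
          have : 1 ≤ n := hn0
          push_cast [Nat.cast_sub this]
          ring
        rw [hcard] at hrest2
        calc ∑ y ∈ Y, ‖nd y - nd m‖
            = ‖nd y₀ - nd m‖ + ∑ y ∈ Y.erase y₀, ‖nd y - nd m‖ :=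
              (Finset.add_sum_erase _ _ hy₀Y).symm
          _ ≤ r/8 + ((n:ℝ) - 1) * r := add_le_add hterm hrest2
      calc ‖nd xbar - nd m‖ = ‖∑ y ∈ Y, (n : ℝ)⁻¹ • (nd y - nd m)‖ := by rw [hsplit]
        _ ≤ ∑ y ∈ Y, ‖(n : ℝ)⁻¹ • (nd y - nd m)‖ := norm_sum_le _ _
        _ = ∑ y ∈ Y, (n : ℝ)⁻¹ * ‖nd y - nd m‖ := by
            refine Finset.sum_congr rfl (fun y _ => ?_)
            rw [norm_smul, Real.norm_of_nonneg (inv_nonneg.mpr hnR.le)]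
        _ = (n : ℝ)⁻¹ * ∑ y ∈ Y, ‖nd y - nd m‖ := by rw [Finset.mul_sum]
        _ ≤ (n : ℝ)⁻¹ * (r/8 + ((n:ℝ) - 1) * r) := by
            exact mul_le_mul_of_nonneg_left hsum_bound (inv_nonneg.mpr hnR.le)
        _ = c₁ := by
            have hinv : (n:ℝ)⁻¹ * (n:ℝ) = 1 := inv_mul_cancel₀ (ne_of_gt hnR)
            rw [hc₁]
            linear_combination r * hinv
    have hc₁mem : c₁ ∈ SetR := ⟨hc₁0, ⟨xbar, hxbarK, hbound⟩⟩
    have : r ≤ c₁ := csInf_le hSetRbdd hc₁mem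
    linarith
  -- conclude : N is a singleton of fixed points
  obtain ⟨m₀, hm₀⟩ := hNne
  have hsingle : ∀ m ∈ N, m = m₀ := by
    intro m hm
    have h1 : ‖nd m - nd m₀‖ ≤ r := hdiamN m hm m₀ hm₀
    have h2 : ‖nd m - nd m₀‖ = 0 := le_antisymm (le_trans h1 hrle) (norm_nonneg _)
    have h3 : nd m = nd m₀ := by
      have := sub_eq_zero.mp (norm_eq_zero.mp h2)
      exact this
    exact (WeakDual.toStrongDual_inj _ _).mp h3
  refine ⟨m₀, hNQ hm₀, fun s => ?_⟩
  exact hsingle _ (hNinv s hm₀)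

/-- If `Q` is a nonempty norm-separable weak* compact convex subset of a dual Banach
space and `(S, Q)` is a nonexpansive and norm-distal dynamical system (with `Q`
carrying the weak* topology), then `S` has a common fixed point in `Q`. -/
theorem nonlinear_ryll_nardzewski_separable_dual
    {X : Type*} [NormedAddCommGroup X] [NormedSpace ℝ X] [CompleteSpace X]
    (Q : Set (StrongDual ℝ X)) (hQne : Q.Nonempty)
    -- `Q` is norm-separable (separable for the norm topology of `X*`)
    (hQsep : TopologicalSpace.IsSeparable Q)
    (hQcomp : IsCompact (StrongDual.toWeakDual '' Q))
    (hQconv : Convex ℝ Q)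
    {S : Type*} [Semigroup S] (act : S → StrongDual ℝ X → StrongDual ℝ X)
    (hmaps : ∀ s : S, Set.MapsTo (act s) Q Q)
    (hact : ∀ s t : S, ∀ x ∈ Q, act (s * t) x = act s (act t x))
    (hcont : ∀ s : S, ContinuousOn
      (fun x : WeakDual ℝ X => StrongDual.toWeakDual (act s (WeakDual.toStrongDual x)))
      (StrongDual.toWeakDual '' Q))
    (hnonexp : ∀ s : S, ∀ x ∈ Q, ∀ y ∈ Q, ‖act s x - act s y‖ ≤ ‖x - y‖)
    (hdistal : ∀ x ∈ Q, ∀ y ∈ Q, x ≠ y →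
      (0 : StrongDual ℝ X) ∉ closure {z : StrongDual ℝ X | ∃ s : S, z = act s x - act s y}) :
    ∃ x ∈ Q, ∀ s : S, act s x = x := by
  classical
  set Q' : Set (WeakDual ℝ X) := StrongDual.toWeakDual '' Q with hQ'
  set A : S → WeakDual ℝ X → WeakDual ℝ X :=
    fun s x => StrongDual.toWeakDual (act s (WeakDual.toStrongDual x)) with hA
  have hrt : ∀ v : StrongDual ℝ X, WeakDual.toStrongDual (StrongDual.toWeakDual v) = v :=
    fun v => rfl
  have hmem : ∀ x ∈ Q', WeakDual.toStrongDual x ∈ Q := by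
    rintro x ⟨q, hq, rfl⟩
    rw [hrt]; exact hq
  have himg : WeakDual.toStrongDual '' Q' = Q := by
    rw [hQ', Set.image_image]
    simp only [hrt, Set.image_id']
  obtain ⟨x, hxQ', hxfix⟩ := weak_aux Q' (hQne.image _) (by rw [himg]; exact hQsep)
    hQcomp (hQconv.linear_image (StrongDual.toWeakDual (𝕜 := ℝ) (E := X)).toLinearMap)
    A
    (by
      rintro s x ⟨q, hq, rfl⟩
      exact ⟨act s q, hmaps s hq, by rw [hA]; simp only [hrt]⟩)
    (by
      rintro s t x ⟨q, hq, rfl⟩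
      simp only [hA, hrt]
      rw [hact s t q hq])
    (fun s => hcont s)
    (by
      rintro s x ⟨q, hq, rfl⟩ y ⟨p, hp, rfl⟩
      simp only [hA, hrt]
      exact hnonexp s q hq p hp)
    (by
      rintro x hx y hy hxy
      have hnexy : WeakDual.toStrongDual x ≠ WeakDual.toStrongDual y := by
        intro h
        exact hxy ((WeakDual.toStrongDual_inj _ _).mp h)
      have h0 := hdistal _ (hmem x hx) _ (hmem y hy) hnexy
      rw [Metric.mem_closure_iff] at h0
      push_neg at h0
      obtain ⟨δ, hδpos, hδ⟩ := h0
      refine ⟨δ, hδpos, fun σ => ?_⟩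
      have hmemD : act σ (WeakDual.toStrongDual x) - act σ (WeakDual.toStrongDual y) ∈
          {z : StrongDual ℝ X | ∃ s : S, z = act s (WeakDual.toStrongDual x) -
            act s (WeakDual.toStrongDual y)} := ⟨σ, rfl⟩
      have := hδ _ hmemD
      rw [dist_zero_left] at this
      calc δ ≤ ‖act σ (WeakDual.toStrongDual x) - act σ (WeakDual.toStrongDual y)‖ := this
        _ = ‖WeakDual.toStrongDual (A σ x) - WeakDual.toStrongDual (A σ y)‖ := by
            simp only [hA, hrt])
  obtain ⟨q, hqQ, hqeq⟩ := hxQ'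
  refine ⟨q, hqQ, fun s => ?_⟩
  have h1 : A s x = x := hxfix s
  rw [hA, ← hqeq] at h1
  simp only [hrt] at h1
  exact (StrongDual.toWeakDual_inj _ _).mp h1
end

section
/- Let (X,τ) be a locally convex space, let S be a countable semigroup, and let K be a minimal S-invariant weakly compact subset of X (so that the orbit {su : s ∈ S} is weakly dense in K for each u ∈ K) such that the dynamical system (S,K) (with K carrying the weak topology) is τ-distal. Then (S,K) is weakly distal: for every pair of distinct points x, y ∈ K, no net (s_α) in S satisfies w-lim s_α x = w-lim s_α y. -/
open Filter Topology

section Aux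

variable {X : Type*} [AddCommGroup X] [Module ℝ X] [TopologicalSpace X]
    [IsTopologicalAddGroup X] [ContinuousSMul ℝ X] [LocallyConvexSpace ℝ X]

/-- A `τ`-closed convex set is weakly closed. -/
lemma AuxWD.isClosed_toWeakSpace_image {A : Set X} (hA : Convex ℝ A) (hcl : IsClosed A) :
    IsClosed (toWeakSpace ℝ X '' A) := by
  have h := hA.toWeakSpace_closure (𝕜 := ℝ)
  rw [hcl.closure_eq] at h
  rw [h]
  exact isClosed_closure

/-- In a topological additive group, points of the closure are `W`-close to the set. -/
lemma AuxWD.exists_sub_mem_of_mem_closure {G : Type*} [AddCommGroup G] [TopologicalSpace G]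
    [IsTopologicalAddGroup G] {A : Set G} {z : G} (hz : z ∈ closure A) {W : Set G}
    (hW : W ∈ 𝓝 (0 : G)) : ∃ a ∈ A, z - a ∈ W := by
  have hc : ContinuousAt (fun p : G => z - p) z := by fun_prop
  have hmem : {p : G | z - p ∈ W} ∈ 𝓝 z := by
    have := hc (by simpa using hW)
    exact this
  rcases mem_closure_iff_nhds.mp hz _ hmem with ⟨a, ha, haA⟩
  exact ⟨a, haA, ha⟩

/-- Two points whose neighborhoods always meet are inseparable (in a topological add group). -/
lemma AuxWD.inseparable_of_meets {G : Type*} [AddCommGroup G] [TopologicalSpace G]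
    [IsTopologicalAddGroup G] {a b : G}
    (h : ∀ N ∈ 𝓝 a, ∀ M ∈ 𝓝 b, (N ∩ M).Nonempty) : Inseparable a b := by
  by_contra hc
  rcases Filter.disjoint_iff.mp (disjoint_nhds_nhds_iff_not_inseparable.mpr hc) with
    ⟨N, hN, M, hM, hdis⟩
  rcases h N hN M hM with ⟨p, hp⟩
  exact absurd hp (by simp [Set.disjoint_iff_inter_eq_empty.mp hdis])

omit [LocallyConvexSpace ℝ X] in
/-- There is a countable set (the rational linear combinations) that is a net for the
convex hull of a countable set, at every scale simultaneously. -/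
lemma AuxWD.exists_countable_net {C : Set X} (hC : C.Countable) (hCne : C.Nonempty) :
    ∃ D : Set X, D.Countable ∧ ∀ V ∈ 𝓝 (0 : X), ∀ p ∈ convexHull ℝ C, ∃ d ∈ D, d - p ∈ V := by
  obtain ⟨e, rfl⟩ := hC.exists_eq_range hCne
  set h : (ℕ →₀ ℚ) →+ X := Finsupp.liftAddHom
    (fun k => AddMonoidHom.mk' (fun a : ℚ => (a : ℝ) • e k)
      (by intro a b; push_cast; rw [add_smul])) with hh
  refine ⟨Set.range h, Set.countable_range _, ?_⟩
  intro V hV p hp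
  rw [convexHull_eq] at hp
  obtain ⟨ι, t, w, z, hw0, hw1, hz, hcm⟩ := hp
  have hkex : ∀ i : ι, ∃ m : ℕ, i ∈ t → e m = z i := by
    intro i
    by_cases hi : i ∈ t
    · rcases hz i hi with ⟨m, hm⟩
      exact ⟨m, fun _ => hm⟩
    · exact ⟨0, fun hmem => absurd hmem hi⟩
  choose k hk using hkex
  have hG : Continuous fun r : ι → ℝ => (∑ i ∈ t, r i • e (k i)) - p := by
    refine Continuous.sub ?_ continuous_const
    exact continuous_finset_sum _ (fun i _ => (continuous_apply i).smul continuous_const)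
  have hGw : (∑ i ∈ t, w i • e (k i)) - p = 0 := by
    have : ∑ i ∈ t, w i • e (k i) = ∑ i ∈ t, w i • z i := by
      refine Finset.sum_congr rfl (fun i hi => by rw [hk i hi])
    rw [this, ← Finset.centerMass_eq_of_sum_1 _ _ hw1, hcm, sub_self]
  have hGV : (fun r : ι → ℝ => (∑ i ∈ t, r i • e (k i)) - p) ⁻¹' V ∈ 𝓝 w := by
    refine hG.continuousAt.preimage_mem_nhds ?_
    simpa [hGw] using hV
  rw [nhds_pi] at hGV
  rcases Filter.mem_pi.mp hGV with ⟨I, hIfin, sI, hsI, hpi⟩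
  have hqex : ∀ i : ι, ∃ q : ℚ, (q : ℝ) ∈ sI i := by
    intro i
    rcases Metric.mem_nhds_iff.mp (hsI i) with ⟨ε, hε, hball⟩
    rcases exists_rat_near (w i) hε with ⟨q, hq⟩
    exact ⟨q, hball (by simpa [Real.dist_eq, abs_sub_comm] using hq)⟩
  choose q hq using hqex
  refine ⟨∑ i ∈ t, (q i : ℝ) • e (k i), ⟨∑ i ∈ t, Finsupp.single (k i) (q i), ?_⟩, ?_⟩
  · rw [map_sum]
    refine Finset.sum_congr rfl (fun i _ => ?_)
    rw [hh, Finsupp.liftAddHom_apply_single]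
    rfl
  · exact hpi (fun i _ => hq i)

end Aux


open Set

/-- **Lifting distality to the weak topology in locally convex spaces.**
Let `(X, τ)` be a locally convex space, `S` a countable semigroup and `K` a minimal
`S`-invariant weakly compact subset of `X` such that the dynamical system `(S, K)`
(with `K` carrying the weak topology) is `τ`-distal.  Then `(S, K)` is weakly
distal: for distinct `x, y ∈ K` no net `(s_α)` in `S` satisfies
`w-lim s_α x = w-lim s_α y`. -/
theorem weakly_distal_of_tau_distal
    {X : Type*} [AddCommGroup X] [Module ℝ X] [TopologicalSpace X]
    [IsTopologicalAddGroup X] [ContinuousSMul ℝ X] [LocallyConvexSpace ℝ X]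
    {S : Type*} [Semigroup S] [Countable S] (act : S → X → X)
    (K : Set X) (hKne : K.Nonempty)
    -- `K` is weakly compact
    (hKcomp : IsCompact (toWeakSpace ℝ X '' K))
    -- `(S, K)` is a dynamical system for the weak topology on `K`
    (hmaps : ∀ s : S, Set.MapsTo (act s) K K)
    (hact : ∀ s t : S, ∀ x ∈ K, act (s * t) x = act s (act t x))
    (hcont : ∀ s : S, ContinuousOn
      (fun x : WeakSpace ℝ X => toWeakSpace ℝ X (act s ((toWeakSpace ℝ X).symm x)))
      (toWeakSpace ℝ X '' K))
    -- `K` is a *minimal* `S`-invariant weakly compact subset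
    (hKmin : ∀ K₀ : Set X, K₀.Nonempty → K₀ ⊆ K → IsCompact (toWeakSpace ℝ X '' K₀) →
      (∀ s : S, Set.MapsTo (act s) K₀ K₀) → K₀ = K)
    -- `(S, K)` is `τ`-distal
    (hdistal : ∀ x ∈ K, ∀ y ∈ K, x ≠ y →
      (0 : X) ∉ closure {z : X | ∃ s : S, z = act s x - act s y}) :
    -- `(S, K)` is weakly distal: no common weak limit point of the images of `x` and
    -- `y` under a single net in `S`
    ∀ x ∈ K, ∀ y ∈ K, x ≠ y →
      ¬ ∃ u : WeakSpace ℝ X, ∀ U ∈ nhds u,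
        ∃ s : S, toWeakSpace ℝ X (act s x) ∈ U ∧ toWeakSpace ℝ X (act s y) ∈ U := by
  classical
  intro x hx y hy hxy
  rintro ⟨u, hu⟩
  -- distality data
  set Dset : Set X := {z : X | ∃ s : S, z = act s x - act s y} with hDsetdef
  have h0 : (0 : X) ∉ closure Dset := hdistal x hx y hy hxy
  set O : Set X := (closure Dset)ᶜ with hOdef
  have hOopen : IsOpen O := isClosed_closure.isOpen_compl
  have hO0 : (0 : X) ∈ O := h0
  have hODisj : ∀ z ∈ Dset, z ∉ O := fun z hz hzO => hzO (subset_closure hz)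
  -- neighborhood calculus helpers
  have hsubkey : ∀ V' : Set X, V' ∈ 𝓝 (0 : X) →
      ∃ W ∈ 𝓝 (0 : X), ∀ a ∈ W, ∀ b ∈ W, a - b ∈ V' := by
    intro V' hV'
    have hcont2 : Filter.Tendsto (fun p : X × X => p.1 - p.2)
        (𝓝 ((0 : X), (0 : X))) (𝓝 (0 : X)) := by
      simpa using continuous_sub.tendsto (((0 : X), (0 : X)) : X × X)
    have hpre := hcont2 hV'
    rw [nhds_prod_eq] at hpre
    rcases Filter.mem_prod_iff.mp hpre with ⟨N₁, hN₁, N₂, hN₂, hsub⟩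
    exact ⟨N₁ ∩ N₂, Filter.inter_mem hN₁ hN₂,
      fun a ha b hb => hsub (Set.mk_mem_prod ha.1 hb.2)⟩
  have haddkey : ∀ V' : Set X, V' ∈ 𝓝 (0 : X) →
      ∃ W ∈ 𝓝 (0 : X), ∀ a ∈ W, ∀ b ∈ W, a + b ∈ V' := by
    intro V' hV'
    have hcont2 : Filter.Tendsto (fun p : X × X => p.1 + p.2)
        (𝓝 ((0 : X), (0 : X))) (𝓝 (0 : X)) := by
      simpa using continuous_add.tendsto (((0 : X), (0 : X)) : X × X)
    have hpre := hcont2 hV'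
    rw [nhds_prod_eq] at hpre
    rcases Filter.mem_prod_iff.mp hpre with ⟨N₁, hN₁, N₂, hN₂, hsub⟩
    exact ⟨N₁ ∩ N₂, Filter.inter_mem hN₁ hN₂,
      fun a ha b hb => hsub (Set.mk_mem_prod ha.1 hb.2)⟩
  obtain ⟨W₁, hW₁, hW₁O⟩ := hsubkey O (hOopen.mem_nhds hO0)
  obtain ⟨W₂, hW₂, hW₂W₁⟩ := haddkey W₁ hW₁
  -- a convex neighborhood of 0 inside W₂
  obtain ⟨Vc, ⟨hVc𝓝, hVcconv⟩, hVcW₂⟩ :=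
    (LocallyConvexSpace.convex_basis_zero ℝ X).mem_iff.mp hW₂
  obtain ⟨W₃, hW₃, hW₃Vc⟩ := hsubkey Vc hVc𝓝
  set B : Set X := closure Vc with hBdef
  have hBconv : Convex ℝ B := hVcconv.closure
  have hBclosed : IsClosed B := isClosed_closure
  have hBW₁ : B ⊆ W₁ := by
    intro z hz
    rcases AuxWD.exists_sub_mem_of_mem_closure hz hW₂ with ⟨a, haVc, hza⟩
    have := hW₂W₁ a (hVcW₂ haVc) (z - a) hza
    simpa using this
  have hBO : ∀ a ∈ B, ∀ b ∈ B, a - b ∈ O := fun a ha b hb => hW₁O a (hBW₁ ha) b (hBW₁ hb)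
  -- the countable orbit of x
  set C : Set X := insert x (Set.range fun s : S => act s x) with hCdef
  have hCcount : C.Countable := (Set.countable_range _).insert x
  have hCK : C ⊆ K := by
    intro c hc
    rcases hc with rfl | ⟨s, rfl⟩
    · exact hx
    · exact hmaps s hx
  have hCx : x ∈ C := Set.mem_insert x _
  have hCinv : ∀ s : S, ∀ c ∈ C, act s c ∈ C := by
    intro s c hc
    rcases hc with rfl | ⟨t, rfl⟩
    · exact Set.mem_insert_of_mem _ ⟨s, rfl⟩
    · exact Set.mem_insert_of_mem _ ⟨s * t,
        show act (s * t) x = act s (act t x) from hact s t x hx⟩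
  -- minimality: K is contained in the weak closure of `C`
  set K₁ : Set X := {z ∈ K | toWeakSpace ℝ X z ∈ closure (toWeakSpace ℝ X '' C)} with hK₁def
  have hK₁img : toWeakSpace ℝ X '' K₁ =
      (toWeakSpace ℝ X '' K) ∩ closure (toWeakSpace ℝ X '' C) := by
    ext w
    constructor
    · rintro ⟨z, ⟨hzK, hzc⟩, rfl⟩
      exact ⟨Set.mem_image_of_mem _ hzK, hzc⟩
    · rintro ⟨⟨z, hzK, rfl⟩, hc⟩
      exact ⟨z, ⟨hzK, hc⟩, rfl⟩
  have hK₁eq : K₁ = K := by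
    refine hKmin K₁ ⟨x, hx, subset_closure (Set.mem_image_of_mem _ hCx)⟩
      (fun z hz => hz.1) ?_ ?_
    · rw [hK₁img]
      exact hKcomp.inter_right isClosed_closure
    · intro s z hz
      refine ⟨hmaps s hz.1, ?_⟩
      have hfc : ContinuousWithinAt
          (fun w => toWeakSpace ℝ X (act s ((toWeakSpace ℝ X).symm w)))
          (toWeakSpace ℝ X '' C) (toWeakSpace ℝ X z) :=
        ((hcont s) _ (Set.mem_image_of_mem _ hz.1)).mono (Set.image_mono hCK)
      have hmemcl := hfc.mem_closure_image hz.2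
      have himg : (fun w => toWeakSpace ℝ X (act s ((toWeakSpace ℝ X).symm w))) ''
          (toWeakSpace ℝ X '' C) ⊆ toWeakSpace ℝ X '' C := by
        rintro _ ⟨_, ⟨c, hc, rfl⟩, rfl⟩
        simp only [LinearEquiv.symm_apply_apply]
        exact Set.mem_image_of_mem _ (hCinv s c hc)
      have : toWeakSpace ℝ X (act s z) =
          (fun w => toWeakSpace ℝ X (act s ((toWeakSpace ℝ X).symm w)))
            (toWeakSpace ℝ X z) := by simp
      rw [this]
      exact closure_mono himg hmemcl
  have hKhull : ∀ z ∈ K, z ∈ closure (convexHull ℝ C) := by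
    intro z hz
    have hz₁ : z ∈ K₁ := hK₁eq ▸ hz
    have h2 : closure (toWeakSpace ℝ X '' C) ⊆
        toWeakSpace ℝ X '' closure (convexHull ℝ C) := by
      refine closure_minimal (Set.image_mono
        ((subset_convexHull ℝ C).trans subset_closure)) ?_
      exact AuxWD.isClosed_toWeakSpace_image ((convex_convexHull ℝ C).closure) isClosed_closure
    rcases h2 hz₁.2 with ⟨v, hv, hveq⟩
    rwa [← (toWeakSpace ℝ X).injective hveq]
  -- the countable net
  obtain ⟨D, hDcount, hDnet⟩ := AuxWD.exists_countable_net hCcount ⟨x, hCx⟩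
  have hDne : D.Nonempty := by
    rcases hDnet W₃ hW₃ x (subset_convexHull ℝ C hCx) with ⟨d, hd, -⟩
    exact ⟨d, hd⟩
  have hcover : ∀ z ∈ K, ∃ d ∈ D, z - d ∈ B := by
    intro z hz
    rcases AuxWD.exists_sub_mem_of_mem_closure (hKhull z hz) hW₃ with ⟨p, hp, hzp⟩
    rcases hDnet W₃ hW₃ p hp with ⟨d, hd, hdp⟩
    have heq : z - d = (z - p) - (d - p) := by abel
    exact ⟨d, hd, subset_closure (by rw [heq]; exact hW₃Vc _ hzp _ hdp)⟩
  -- Baire category on the compact set `toWeakSpace ℝ X '' K`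
  haveI : CompactSpace ↥(toWeakSpace ℝ X '' K) := isCompact_iff_compactSpace.mp hKcomp
  haveI := hDcount.to_subtype
  haveI : Nonempty ↥D := ⟨⟨hDne.choose, hDne.choose_spec⟩⟩
  haveI : Nonempty ↥(toWeakSpace ℝ X '' K) :=
    ⟨⟨toWeakSpace ℝ X hKne.choose, Set.mem_image_of_mem _ hKne.choose_spec⟩⟩
  set f : ↥D → Set ↥(toWeakSpace ℝ X '' K) := fun d =>
    (fun yy : ↥(toWeakSpace ℝ X '' K) => (yy : WeakSpace ℝ X)) ⁻¹'
      (toWeakSpace ℝ X '' {v : X | v - (d : X) ∈ B}) with hfdef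
  have hconvtrans : ∀ d : X, Convex ℝ {v : X | v - d ∈ B} := by
    intro d v₁ h₁ v₂ h₂ a b ha hb hab
    have hmem := hBconv h₁ h₂ ha hb hab
    have heq : a • (v₁ - d) + b • (v₂ - d) = (a • v₁ + b • v₂) - d := by
      have h1 : a • (v₁ - d) + b • (v₂ - d) = (a • v₁ + b • v₂) - (a • d + b • d) := by
        rw [smul_sub, smul_sub]; abel
      rw [h1, ← add_smul, hab, one_smul]
    rwa [heq] at hmem
  have hclosedtrans : ∀ d : X, IsClosed {v : X | v - d ∈ B} :=
    fun d => hBclosed.preimage (continuous_id.sub continuous_const)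
  have hfclosed : ∀ d : ↥D, IsClosed (f d) := by
    intro d
    exact (AuxWD.isClosed_toWeakSpace_image (hconvtrans d) (hclosedtrans d)).preimage
      continuous_subtype_val
  have hfcover : ⋃ d : ↥D, f d = Set.univ := by
    refine Set.eq_univ_iff_forall.mpr (fun yy => Set.mem_iUnion.mpr ?_)
    rcases yy.2 with ⟨z, hzK, hzeq⟩
    rcases hcover z hzK with ⟨d, hdD, hdB⟩
    exact ⟨⟨d, hdD⟩, ⟨z, hdB, hzeq⟩⟩
  obtain ⟨d, hdint⟩ := nonempty_interior_of_iUnion_of_closed hfclosed hfcover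
  obtain ⟨y₀, hy₀⟩ := hdint
  obtain ⟨U₀, hU₀open, hU₀pre⟩ := isOpen_induced_iff.mp (isOpen_interior
    (s := f d) (X := ↥(toWeakSpace ℝ X '' K)))
  have hy₀U₀ : (y₀ : WeakSpace ℝ X) ∈ U₀ := by
    have : y₀ ∈ Subtype.val ⁻¹' U₀ := hU₀pre ▸ hy₀
    exact this
  have hU₀small : ∀ w ∈ U₀, w ∈ toWeakSpace ℝ X '' K →
      w ∈ toWeakSpace ℝ X '' {v : X | v - (d : X) ∈ B} := by
    intro w hwU hwK
    have h1 : (⟨w, hwK⟩ : ↥(toWeakSpace ℝ X '' K)) ∈ Subtype.val ⁻¹' U₀ := hwU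
    rw [hU₀pre] at h1
    have h2 : (⟨w, hwK⟩ : ↥(toWeakSpace ℝ X '' K)) ∈ f d := interior_subset h1
    exact h2
  -- the "proximality set"
  set P : Set (WeakSpace ℝ X × WeakSpace ℝ X) :=
    {q | ∃ s : S, q = (toWeakSpace ℝ X (act s x), toWeakSpace ℝ X (act s y))} with hPdef
  have hPchar : ∀ w : WeakSpace ℝ X, ((w, w) ∈ closure P ↔
      ∀ N ∈ 𝓝 w, ∃ s : S,
        toWeakSpace ℝ X (act s x) ∈ N ∧ toWeakSpace ℝ X (act s y) ∈ N) := by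
    intro w
    rw [mem_closure_iff_nhds]
    constructor
    · intro h N hN
      rcases h (N ×ˢ N) (by rw [nhds_prod_eq]; exact Filter.prod_mem_prod hN hN) with
        ⟨q, hqN, s, rfl⟩
      exact ⟨s, hqN.1, hqN.2⟩
    · intro h M hM
      rw [nhds_prod_eq] at hM
      rcases Filter.mem_prod_iff.mp hM with ⟨N₁, hN₁, N₂, hN₂, hsub⟩
      rcases h (N₁ ∩ N₂) (Filter.inter_mem hN₁ hN₂) with ⟨s, hs₁, hs₂⟩
      exact ⟨_, hsub (Set.mk_mem_prod hs₁.1 hs₂.2), ⟨s, rfl⟩⟩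
  set Q : Set X := {z ∈ K | (toWeakSpace ℝ X z, toWeakSpace ℝ X z) ∈ closure P} with hQdef
  -- Q is nonempty
  have hQne : Q.Nonempty := by
    set g : S → WeakSpace ℝ X × WeakSpace ℝ X :=
      fun s => (toWeakSpace ℝ X (act s x), toWeakSpace ℝ X (act s y)) with hgdef
    have hFne : (Filter.comap g (𝓝 (u, u))).NeBot := by
      rw [Filter.comap_neBot_iff]
      intro t ht
      rw [nhds_prod_eq] at ht
      rcases Filter.mem_prod_iff.mp ht with ⟨N₁, hN₁, N₂, hN₂, hsub⟩
      rcases hu (N₁ ∩ N₂) (Filter.inter_mem hN₁ hN₂) with ⟨s, hs₁, hs₂⟩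
      exact ⟨s, hsub (Set.mk_mem_prod hs₁.1 hs₂.2)⟩
    haveI := hFne
    have hle : Filter.map (fun s : S => toWeakSpace ℝ X (act s x))
        (Filter.comap g (𝓝 (u, u))) ≤ Filter.principal (toWeakSpace ℝ X '' K) := by
      refine Filter.le_principal_iff.mpr (Filter.mem_map.mpr (Filter.univ_mem' ?_))
      intro s
      exact Set.mem_image_of_mem _ (hmaps s hx)
    obtain ⟨w, hwK, hwcl⟩ := hKcomp.exists_clusterPt hle
    have hmeets : ∀ N ∈ 𝓝 w, ∀ U ∈ 𝓝 u, (N ∩ U).Nonempty := by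
      intro N hN U hU
      have htU : {v : WeakSpace ℝ X | ∃ s : S, g s ∈ U ×ˢ U ∧
          v = toWeakSpace ℝ X (act s x)} ∈
          Filter.map (fun s : S => toWeakSpace ℝ X (act s x))
            (Filter.comap g (𝓝 (u, u))) := by
        have hUU : U ×ˢ U ∈ 𝓝 (u, u) := by
          rw [nhds_prod_eq]; exact Filter.prod_mem_prod hU hU
        refine Filter.mem_map.mpr (Filter.mem_of_superset
          (Filter.preimage_mem_comap hUU) ?_)
        intro s hs
        exact ⟨s, hs, rfl⟩
      rcases clusterPt_iff_nonempty.mp hwcl hN htU with ⟨v, hvN, s, hsU, rfl⟩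
      exact ⟨_, hvN, (Set.mem_prod.mp hsU).1⟩
    have hinsep : Inseparable w u := AuxWD.inseparable_of_meets hmeets
    rcases hwK with ⟨z₀, hz₀K, hz₀⟩
    refine ⟨z₀, hz₀K, (hPchar _).mpr ?_⟩
    intro N hN
    refine hu N ?_
    rw [← hinsep]
    rwa [hz₀] at hN
  -- Q is compact (in the weak topology) and invariant
  have hQimg : toWeakSpace ℝ X '' Q =
      (toWeakSpace ℝ X '' K) ∩ ((fun w : WeakSpace ℝ X => (w, w)) ⁻¹' closure P) := by
    ext w
    constructor
    · rintro ⟨z, ⟨hzK, hzP⟩, rfl⟩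
      exact ⟨Set.mem_image_of_mem _ hzK, hzP⟩
    · rintro ⟨⟨z, hzK, rfl⟩, hP⟩
      exact ⟨z, ⟨hzK, hP⟩, rfl⟩
  have hQcomp : IsCompact (toWeakSpace ℝ X '' Q) := by
    rw [hQimg]
    exact hKcomp.inter_right (isClosed_closure.preimage (continuous_id.prodMk continuous_id))
  have hQinv : ∀ s₀ : S, Set.MapsTo (act s₀) Q Q := by
    intro s₀ z hz
    refine ⟨hmaps s₀ hz.1, (hPchar _).mpr ?_⟩
    intro N hN
    have hfc : ContinuousWithinAt
        (fun w => toWeakSpace ℝ X (act s₀ ((toWeakSpace ℝ X).symm w)))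
        (toWeakSpace ℝ X '' K) (toWeakSpace ℝ X z) :=
      (hcont s₀) _ (Set.mem_image_of_mem _ hz.1)
    have hN' : N ∈ 𝓝 ((fun w => toWeakSpace ℝ X (act s₀ ((toWeakSpace ℝ X).symm w)))
        (toWeakSpace ℝ X z)) := by
      simpa using hN
    have hpre := hfc hN'
    rcases mem_nhdsWithin_iff_exists_mem_nhds_inter.mp hpre with ⟨N', hN', hN'sub⟩
    rcases (hPchar _).mp hz.2 N' hN' with ⟨s, hsx, hsy⟩
    refine ⟨s₀ * s, ?_, ?_⟩
    · have hh : toWeakSpace ℝ X (act s x) ∈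
          (fun w => toWeakSpace ℝ X (act s₀ ((toWeakSpace ℝ X).symm w))) ⁻¹' N :=
        hN'sub ⟨hsx, Set.mem_image_of_mem _ (hmaps s hx)⟩
      have : toWeakSpace ℝ X (act s₀ (act s x)) ∈ N := by simpa using hh
      rwa [hact s₀ s x hx]
    · have hh : toWeakSpace ℝ X (act s y) ∈
          (fun w => toWeakSpace ℝ X (act s₀ ((toWeakSpace ℝ X).symm w))) ⁻¹' N :=
        hN'sub ⟨hsy, Set.mem_image_of_mem _ (hmaps s hy)⟩
      have : toWeakSpace ℝ X (act s₀ (act s y)) ∈ N := by simpa using hh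
      rwa [hact s₀ s y hy]
  have hQeq : Q = K := hKmin Q hQne (fun z hz => hz.1) hQcomp hQinv
  -- endgame
  rcases y₀.2 with ⟨z₁, hz₁K, hz₁⟩
  have hz₁Q : z₁ ∈ Q := hQeq ▸ hz₁K
  have hNU₀ : U₀ ∈ 𝓝 (toWeakSpace ℝ X z₁) := by
    rw [hz₁]
    exact hU₀open.mem_nhds hy₀U₀
  rcases (hPchar _).mp hz₁Q.2 U₀ hNU₀ with ⟨s, hsx, hsy⟩
  have hsxB : act s x - (d : X) ∈ B := by
    rcases hU₀small _ hsx (Set.mem_image_of_mem _ (hmaps s hx)) with ⟨v, hvB, hveq⟩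
    rwa [← (toWeakSpace ℝ X).injective hveq]
  have hsyB : act s y - (d : X) ∈ B := by
    rcases hU₀small _ hsy (Set.mem_image_of_mem _ (hmaps s hy)) with ⟨v, hvB, hveq⟩
    rwa [← (toWeakSpace ℝ X).injective hveq]
  have hfin : act s x - act s y ∈ O := by
    have := hBO _ hsxB _ hsyB
    rwa [sub_sub_sub_cancel_right] at this
  exact hODisj _ ⟨s, rfl⟩ hfin
end

section
/- Let X be a reflexive Banach space, let z ∈ X with ‖z‖ = 1, and let Q = {φ ∈ X* : ‖φ‖ = φ(z) = 1}. Let (S,(Q,weak)) be a dynamical system (Q carrying the weak topology of X*) that is norm-nonexpansive and non-deflating. Then there exists ψ ∈ Q such that sψ = ψ for all s ∈ S. -/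
open NormedSpace Set

set_option maxHeartbeats 1000000

open NormedSpace Set WeakDual Metric Topology

namespace NFT

variable {X : Type*} [NormedAddCommGroup X] [NormedSpace ℝ X]



/-- The norm distance, as a function on the weak-star dual. -/
noncomputable def wdist (φ χ : WeakDual ℝ X) : ℝ :=
  ‖WeakDual.toStrongDual φ - WeakDual.toStrongDual χ‖

lemma wdist_nonneg (φ χ : WeakDual ℝ X) : 0 ≤ wdist φ χ := norm_nonneg _

lemma wdist_comm (φ χ : WeakDual ℝ X) : wdist φ χ = wdist χ φ := norm_sub_rev _ _

lemma wdist_self (φ : WeakDual ℝ X) : wdist φ φ = 0 := by simp [wdist]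

lemma wdist_triangle (φ χ ψ : WeakDual ℝ X) : wdist φ ψ ≤ wdist φ χ + wdist χ ψ :=
  norm_sub_le_norm_sub_add_norm_sub _ _ _

lemma wdist_eq_zero_iff {φ χ : WeakDual ℝ X} : wdist φ χ = 0 ↔ φ = χ := by
  rw [wdist, norm_eq_zero, sub_eq_zero]
  exact ⟨fun h => WeakDual.toStrongDual.injective h, fun h => by rw [h]⟩

lemma wdist_pos {φ χ : WeakDual ℝ X} (h : φ ≠ χ) : 0 < wdist φ χ :=
  lt_of_le_of_ne (wdist_nonneg _ _) (fun h0 => h (wdist_eq_zero_iff.mp h0.symm))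

lemma isClosed_wdist_le (c : ℝ) :
    IsClosed {p : WeakDual ℝ X × WeakDual ℝ X | wdist p.1 p.2 ≤ c} := by
  rcases le_or_gt 0 c with hc | hc
  · have : {p : WeakDual ℝ X × WeakDual ℝ X | wdist p.1 p.2 ≤ c} =
        ⋂ (x : X), {p : WeakDual ℝ X × WeakDual ℝ X | ‖p.1 x - p.2 x‖ ≤ c * ‖x‖} := by
      ext p
      simp only [Set.mem_iInter, Set.mem_setOf_eq]
      rw [wdist, ContinuousLinearMap.opNorm_le_iff hc]
      refine ⟨fun h x => ?_, fun h x => ?_⟩ <;> simpa using h x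
    rw [this]
    refine isClosed_iInter fun x => ?_
    have h1 : Continuous fun p : WeakDual ℝ X × WeakDual ℝ X => ‖p.1 x - p.2 x‖ :=
      (((WeakDual.eval_continuous x).comp continuous_fst).sub
        ((WeakDual.eval_continuous x).comp continuous_snd)).norm
    exact isClosed_le h1 continuous_const
  · convert isClosed_empty
    refine Set.eq_empty_of_forall_notMem fun p hp => ?_
    exact absurd (le_trans (wdist_nonneg _ _) hp) (not_le.mpr hc)

lemma isClosed_wdist_le' (ψ : WeakDual ℝ X) (c : ℝ) :
    IsClosed {φ : WeakDual ℝ X | wdist φ ψ ≤ c} := by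
  have : {φ : WeakDual ℝ X | wdist φ ψ ≤ c} =
      (fun φ : WeakDual ℝ X => (φ, ψ)) ⁻¹' {p : WeakDual ℝ X × WeakDual ℝ X | wdist p.1 p.2 ≤ c} :=
    rfl
  rw [this]
  exact (isClosed_wdist_le c).preimage (continuous_id.prodMk continuous_const)




lemma wdist_convex_comb {a b : ℝ} (ha : 0 ≤ a) (hb : 0 ≤ b) (hab : a + b = 1)
    (ψ ψ' m : WeakDual ℝ X) : wdist (a • ψ + b • ψ') m ≤ a * wdist ψ m + b * wdist ψ' m := by
  have key : WeakDual.toStrongDual (a • ψ + b • ψ') - WeakDual.toStrongDual m =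
      a • (WeakDual.toStrongDual ψ - WeakDual.toStrongDual m) +
        b • (WeakDual.toStrongDual ψ' - WeakDual.toStrongDual m) := by
    have h1 : WeakDual.toStrongDual (a • ψ + b • ψ') =
        a • WeakDual.toStrongDual ψ + b • WeakDual.toStrongDual ψ' := by
      rw [map_add, map_smul, map_smul]
    rw [h1]
    have h2 : (a + b) • WeakDual.toStrongDual m = WeakDual.toStrongDual m := by
      rw [hab, one_smul]
    calc a • WeakDual.toStrongDual ψ + b • WeakDual.toStrongDual ψ' -
        WeakDual.toStrongDual m
        = a • WeakDual.toStrongDual ψ + b • WeakDual.toStrongDual ψ' -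
          (a + b) • WeakDual.toStrongDual m := by rw [h2]
    _ = a • (WeakDual.toStrongDual ψ - WeakDual.toStrongDual m) +
          b • (WeakDual.toStrongDual ψ' - WeakDual.toStrongDual m) := by
        rw [add_smul]; module
  rw [wdist, key]
  calc ‖a • (WeakDual.toStrongDual ψ - WeakDual.toStrongDual m) +
      b • (WeakDual.toStrongDual ψ' - WeakDual.toStrongDual m)‖
      ≤ ‖a • (WeakDual.toStrongDual ψ - WeakDual.toStrongDual m)‖ +
        ‖b • (WeakDual.toStrongDual ψ' - WeakDual.toStrongDual m)‖ := norm_add_le _ _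
  _ = a * wdist ψ m + b * wdist ψ' m := by
      rw [norm_smul, norm_smul, Real.norm_of_nonneg ha, Real.norm_of_nonneg hb, wdist, wdist]

lemma wdist_centroid {n : ℕ} (hn : 0 < n) (x : Fin n → WeakDual ℝ X) (m : WeakDual ℝ X) :
    wdist ((n : ℝ)⁻¹ • ∑ i, x i) m ≤ (n : ℝ)⁻¹ * ∑ i, wdist (x i) m := by
  have hn' : (0 : ℝ) < n := Nat.cast_pos.mpr hn
  have key : WeakDual.toStrongDual ((n : ℝ)⁻¹ • ∑ i, x i) - WeakDual.toStrongDual m =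
      (n : ℝ)⁻¹ • ∑ i, (WeakDual.toStrongDual (x i) - WeakDual.toStrongDual m) := by
    have h2 : ((n : ℝ)⁻¹ • (n : ℝ) • WeakDual.toStrongDual m) = WeakDual.toStrongDual m := by
      rw [smul_smul, inv_mul_cancel₀ (ne_of_gt hn'), one_smul]
    rw [map_smul, map_sum, Finset.sum_sub_distrib, smul_sub, Finset.sum_const,
      Finset.card_univ, Fintype.card_fin, ← Nat.cast_smul_eq_nsmul ℝ, h2]
  rw [wdist, key, norm_smul, Real.norm_of_nonneg (le_of_lt (inv_pos.mpr hn'))]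
  refine mul_le_mul_of_nonneg_left ?_ (le_of_lt (inv_pos.mpr hn'))
  refine le_trans (norm_sum_le _ _) ?_
  refine le_of_eq (Finset.sum_congr rfl fun i _ => rfl)

lemma centroid_mem_convex {n : ℕ} (hn : 0 < n) {K : Set (WeakDual ℝ X)} (hK : Convex ℝ K)
    (x : Fin n → WeakDual ℝ X) (hx : ∀ i, x i ∈ K) :
    ((n : ℝ)⁻¹ • ∑ i, x i) ∈ K := by
  have hn' : (0 : ℝ) < n := Nat.cast_pos.mpr hn
  have : ((n : ℝ)⁻¹ • ∑ i, x i) = ∑ i : Fin n, (n : ℝ)⁻¹ • x i := by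
    rw [Finset.smul_sum]
  rw [this]
  refine hK.sum_mem (fun i _ => le_of_lt (inv_pos.mpr hn')) ?_ (fun i _ => hx i)
  rw [Finset.sum_const, Finset.card_univ, Fintype.card_fin, nsmul_eq_mul]
  field_simp




/-- Mazur: in the weak-star topology of the dual of a reflexive space, norm-closed
convex sets are closed. -/
lemma mazur_wd (hrefl : Function.Surjective (inclusionInDoubleDual ℝ X))
    {C : Set (StrongDual ℝ X)} (hCc : Convex ℝ C) (hCcl : IsClosed C) :
    IsClosed (StrongDual.toWeakDual '' C : Set (WeakDual ℝ X)) := by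
  rw [← isOpen_compl_iff]
  rw [isOpen_iff_forall_mem_open]
  intro φ hφ
  have hφ' : (WeakDual.toStrongDual φ : StrongDual ℝ X) ∉ C := by
    intro hmem
    exact hφ ⟨_, hmem, rfl⟩
  obtain ⟨f, u, hfu, huf⟩ := geometric_hahn_banach_closed_point hCc hCcl hφ'
  obtain ⟨x, hx⟩ := hrefl f
  refine ⟨{ψ : WeakDual ℝ X | u < ψ x}, ?_, ?_, ?_⟩
  · rintro ψ hψ ⟨χ, hχ, rfl⟩
    have : f χ < u := hfu χ hχ
    have hfx : f χ = χ x := by rw [← hx]; rfl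
    rw [hfx] at this
    simp only [Set.mem_setOf_eq] at hψ
    have heq : (StrongDual.toWeakDual χ : WeakDual ℝ X) x = χ x := rfl
    rw [heq] at hψ
    linarith
  · exact isOpen_lt continuous_const (WeakDual.eval_continuous x)
  · have : f (WeakDual.toStrongDual φ) = φ x := by rw [← hx]; rfl
    simpa [Set.mem_setOf_eq, ← this] using huf




lemma countable_approx (hrefl : Function.Surjective (inclusionInDoubleDual ℝ X))
    {O : Set (StrongDual ℝ X)} (hO : O.Countable)
    {M : Set (WeakDual ℝ X)} (hM : M ⊆ closure (StrongDual.toWeakDual '' O)) :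
    ∃ D : Set (WeakDual ℝ X), D.Countable ∧ ∀ ε > 0, ∀ φ ∈ M, ∃ d ∈ D, wdist φ d ≤ ε := by
  classical
  set Z : Set (StrongDual ℝ X) := closure (Submodule.span ℝ O : Set (StrongDual ℝ X)) with hZ
  have hZconv : Convex ℝ Z := (Submodule.span ℝ O).convex.closure
  have hZcl : IsClosed Z := isClosed_closure
  have hsep : TopologicalSpace.IsSeparable Z :=
    (hO.isSeparable.span).closure
  obtain ⟨D₀, hD₀c, hD₀⟩ := hsep
  have hMZ : M ⊆ StrongDual.toWeakDual '' Z := by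
    refine subset_trans hM ?_
    refine closure_minimal ?_ (mazur_wd hrefl hZconv hZcl)
    refine Set.image_mono ?_
    exact subset_trans Submodule.subset_span subset_closure
  refine ⟨StrongDual.toWeakDual '' D₀, hD₀c.image _, ?_⟩
  intro ε hε φ hφ
  obtain ⟨ζ, hζZ, hζeq⟩ := hMZ hφ
  have : ζ ∈ closure D₀ := hD₀ hζZ
  rw [Metric.mem_closure_iff] at this
  obtain ⟨d, hd, hdist⟩ := this ε hε
  refine ⟨StrongDual.toWeakDual d, ⟨d, hd, rfl⟩, ?_⟩
  have : wdist φ (StrongDual.toWeakDual d) = ‖ζ - d‖ := by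
    rw [wdist, ← hζeq]
    rfl
  rw [this]
  exact le_of_lt (by simpa [dist_eq_norm] using hdist)





lemma wdist_le_norms (φ χ : WeakDual ℝ X) :
    wdist φ χ ≤ ‖WeakDual.toStrongDual φ‖ + ‖WeakDual.toStrongDual χ‖ := norm_sub_le _ _

/-- weak-star compact sets are norm-bounded (uniform boundedness). -/
lemma bounded_of_wdCompact [CompleteSpace X] {Q : Set (WeakDual ℝ X)} (hQc : IsCompact Q) :
    ∃ R : ℝ, ∀ φ ∈ Q, ∀ χ ∈ Q, wdist φ χ ≤ R := by
  rcases isEmpty_or_nonempty ↥Q with hE | hNE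
  · exact ⟨0, fun φ hφ => absurd ⟨⟨φ, hφ⟩⟩ (not_nonempty_iff.mpr hE)⟩
  · have hpt : ∀ x : X, ∃ B : ℝ, ∀ φ : ↥Q, ‖(WeakDual.toStrongDual (φ : WeakDual ℝ X)) x‖ ≤ B := by
      intro x
      have himg : IsCompact ((fun φ : WeakDual ℝ X => φ x) '' Q) :=
        hQc.image (WeakDual.eval_continuous x)
      obtain ⟨B, hB⟩ := himg.isBounded.subset_closedBall 0
      refine ⟨B, fun φ => ?_⟩
      have := hB ⟨(φ : WeakDual ℝ X), φ.2, rfl⟩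
      simpa [Metric.mem_closedBall, dist_zero_right] using this
    obtain ⟨R', hR'⟩ := banach_steinhaus (E := X) (F := ℝ)
      (g := fun φ : ↥Q => WeakDual.toStrongDual (φ : WeakDual ℝ X)) hpt
    refine ⟨2 * R', fun φ hφ χ hχ => ?_⟩
    have h1 : ‖WeakDual.toStrongDual φ‖ ≤ R' := hR' ⟨φ, hφ⟩
    have h2 : ‖WeakDual.toStrongDual χ‖ ≤ R' := hR' ⟨χ, hχ⟩
    have := wdist_le_norms φ χ
    linarith


lemma wdist_def (φ χ : WeakDual ℝ X) :
    wdist φ χ = ‖WeakDual.toStrongDual φ - WeakDual.toStrongDual χ‖ := rfl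

attribute [irreducible] wdist



/-- `Q` as a subset of the weak-star dual. -/
def Qw (z : X) : Set (WeakDual ℝ X) :=
  {φ : WeakDual ℝ X | ‖WeakDual.toStrongDual φ‖ = 1 ∧ φ z = 1}

lemma Qw_char {z : X} (hz : ‖z‖ = 1) :
    Qw z = {φ : WeakDual ℝ X | ‖WeakDual.toStrongDual φ‖ ≤ 1 ∧ φ z = 1} := by
  ext φ
  simp only [Qw, Set.mem_setOf_eq]
  refine ⟨fun h => ⟨le_of_eq h.1, h.2⟩, fun h => ⟨le_antisymm h.1 ?_, h.2⟩⟩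
  have h1 : (1 : ℝ) = (WeakDual.toStrongDual φ) z := h.2.symm
  calc (1 : ℝ) = ‖(WeakDual.toStrongDual φ) z‖ := by rw [← h1]; simp
  _ ≤ ‖WeakDual.toStrongDual φ‖ * ‖z‖ := (WeakDual.toStrongDual φ).le_opNorm z
  _ = ‖WeakDual.toStrongDual φ‖ := by rw [hz, mul_one]

lemma isCompact_Qw {z : X} (hz : ‖z‖ = 1) : IsCompact (Qw z) := by
  rw [Qw_char hz]
  have : {φ : WeakDual ℝ X | ‖WeakDual.toStrongDual φ‖ ≤ 1 ∧ φ z = 1} =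
      (WeakDual.toStrongDual ⁻¹' closedBall 0 1) ∩ {φ : WeakDual ℝ X | φ z = 1} := by
    ext φ
    simp [Metric.mem_closedBall, dist_zero_right]
  rw [this]
  exact (WeakDual.isCompact_closedBall (𝕜 := ℝ) (E := X) 0 1).inter_right
    (isClosed_eq (WeakDual.eval_continuous z) continuous_const)

lemma isClosed_Qw {z : X} (hz : ‖z‖ = 1) : IsClosed (Qw z) :=
  (isCompact_Qw hz).isClosed

lemma convex_Qw {z : X} (hz : ‖z‖ = 1) : Convex ℝ (Qw z) := by
  rw [Qw_char hz]
  have h1 : Convex ℝ (WeakDual.toStrongDual ⁻¹' closedBall (0 : StrongDual ℝ X) 1) :=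
    (convex_closedBall _ _).linear_preimage (WeakDual.toStrongDual (𝕜 := ℝ) (E := X)).toLinearMap
  have h2 : Convex ℝ {φ : WeakDual ℝ X | φ z = 1} := by
    intro φ hφ χ hχ a b ha hb hab
    simp only [Set.mem_setOf_eq] at *
    have : (a • φ + b • χ) z = a * φ z + b * χ z := rfl
    rw [this, hφ, hχ]; ring_nf; linarith
  have : {φ : WeakDual ℝ X | ‖WeakDual.toStrongDual φ‖ ≤ 1 ∧ φ z = 1} =
      (WeakDual.toStrongDual ⁻¹' closedBall 0 1) ∩ {φ : WeakDual ℝ X | φ z = 1} := by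
    ext φ; simp [Metric.mem_closedBall, dist_zero_right]
  rw [this]
  exact h1.inter h2

lemma nonempty_Qw {z : X} (hz : ‖z‖ = 1) : (Qw z).Nonempty := by
  have hz0 : z ≠ 0 := by intro h; rw [h, norm_zero] at hz; exact one_ne_zero hz.symm
  obtain ⟨g, hg1, hgz⟩ := exists_dual_vector ℝ z (norm_ne_zero_iff.mpr hz0)
  exact ⟨StrongDual.toWeakDual g, by
    constructor
    · simpa using hg1
    · have : (StrongDual.toWeakDual g : WeakDual ℝ X) z = g z := rfl
      rw [this, hgz, hz]; norm_num⟩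

/-- weakly compact subsets of `X` are norm bounded -/
lemma bounded_of_weaklyCompact [CompleteSpace X] {C : Set X}
    (hC : IsCompact (toWeakSpace ℝ X '' C)) : ∃ R : ℝ, 0 ≤ R ∧ ∀ y ∈ C, ‖y‖ ≤ R := by
  have hpt : ∀ ψ : StrongDual ℝ X, ∃ B : ℝ, ∀ y : C, ‖(inclusionInDoubleDual ℝ X (y : X)) ψ‖ ≤ B := by
    intro ψ
    have hψc : Continuous fun x : WeakSpace ℝ X => ψ x :=
      WeakBilin.eval_continuous ((topDualPairing ℝ X).flip) ψ
    have himg : IsCompact ((fun x : WeakSpace ℝ X => ψ x) '' (toWeakSpace ℝ X '' C)) :=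
      hC.image hψc
    obtain ⟨B, hB⟩ := himg.isBounded.subset_closedBall 0
    refine ⟨B, fun y => ?_⟩
    have : ψ (y : X) ∈ (fun x : WeakSpace ℝ X => ψ x) '' (toWeakSpace ℝ X '' C) :=
      ⟨toWeakSpace ℝ X (y : X), ⟨(y : X), y.2, rfl⟩, rfl⟩
    have := hB this
    simp only [Metric.mem_closedBall, dist_zero_right] at this
    simpa [NormedSpace.inclusionInDoubleDual] using this
  rcases isEmpty_or_nonempty C with hE | hNE
  · exact ⟨0, le_refl _, fun y hy => absurd ⟨⟨y, hy⟩⟩ (not_nonempty_iff.mpr hE)⟩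
  · obtain ⟨R, hR⟩ := banach_steinhaus (E := StrongDual ℝ X) (F := ℝ)
      (g := fun y : C => inclusionInDoubleDual ℝ X (y : X)) (fun ψ => hpt ψ)
    refine ⟨max R 0, le_max_right _ _, fun y hy => ?_⟩
    have h1 : ‖inclusionInDoubleDual ℝ X y‖ ≤ R := hR ⟨y, hy⟩
    have h2 : ‖inclusionInDoubleDual ℝ X y‖ = ‖y‖ :=
      (NormedSpace.inclusionInDoubleDualLi (𝕜 := ℝ) (E := X)).norm_map y
    rw [← h2]
    exact le_trans h1 (le_max_left _ _)




lemma continuous_wd_to_ws (hrefl : Function.Surjective (inclusionInDoubleDual ℝ X)) :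
    Continuous (fun φ : WeakDual ℝ X =>
      toWeakSpace ℝ (StrongDual ℝ X) (WeakDual.toStrongDual φ)) := by
  apply WeakBilin.continuous_of_continuous_eval
  intro F
  obtain ⟨x, hx⟩ := hrefl F
  have : (fun φ : WeakDual ℝ X =>
      ((topDualPairing ℝ (StrongDual ℝ X)).flip) (toWeakSpace ℝ (StrongDual ℝ X) (WeakDual.toStrongDual φ)) F)
      = fun φ : WeakDual ℝ X => φ x := by
    funext φ
    have h1 : ((topDualPairing ℝ (StrongDual ℝ X)).flip)
        (toWeakSpace ℝ (StrongDual ℝ X) (WeakDual.toStrongDual φ)) F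
        = F (WeakDual.toStrongDual φ) := rfl
    rw [h1, ← hx]
    rfl
  rw [this]
  exact WeakDual.eval_continuous x

lemma continuous_ws_to_wd :
    Continuous (fun ψ : WeakSpace ℝ (StrongDual ℝ X) =>
      StrongDual.toWeakDual ((toWeakSpace ℝ (StrongDual ℝ X)).symm ψ)) := by
  apply WeakDual.continuous_of_continuous_eval
  intro y
  have : (fun ψ : WeakSpace ℝ (StrongDual ℝ X) =>
      (StrongDual.toWeakDual ((toWeakSpace ℝ (StrongDual ℝ X)).symm ψ)) y)
      = fun ψ : WeakSpace ℝ (StrongDual ℝ X) =>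
        ((topDualPairing ℝ (StrongDual ℝ X)).flip) ψ (inclusionInDoubleDual ℝ X y) := rfl
  rw [this]
  exact WeakBilin.eval_continuous _ _

/-- Transfer of the continuity hypothesis from the weak topology on the dual
(`WeakSpace`) to the weak-star topology (`WeakDual`); these agree by reflexivity. -/
lemma continuousOn_wd (hrefl : Function.Surjective (inclusionInDoubleDual ℝ X))
    {f : StrongDual ℝ X → StrongDual ℝ X} {Qs : Set (StrongDual ℝ X)}
    (hf : ContinuousOn
      (fun φ : WeakSpace ℝ (StrongDual ℝ X) =>
        toWeakSpace ℝ (StrongDual ℝ X) (f ((toWeakSpace ℝ (StrongDual ℝ X)).symm φ)))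
      (toWeakSpace ℝ (StrongDual ℝ X) '' Qs)) :
    ContinuousOn (fun φ : WeakDual ℝ X => StrongDual.toWeakDual (f (WeakDual.toStrongDual φ)))
      (StrongDual.toWeakDual '' Qs) := by
  have h1 : ContinuousOn (fun φ : WeakDual ℝ X =>
      toWeakSpace ℝ (StrongDual ℝ X) (WeakDual.toStrongDual φ)) (StrongDual.toWeakDual '' Qs) :=
    (continuous_wd_to_ws hrefl).continuousOn
  have hmaps : MapsTo (fun φ : WeakDual ℝ X => toWeakSpace ℝ (StrongDual ℝ X) (WeakDual.toStrongDual φ))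
      (StrongDual.toWeakDual '' Qs) (toWeakSpace ℝ (StrongDual ℝ X) '' Qs) := by
    rintro φ ⟨χ, hχ, rfl⟩
    exact ⟨χ, hχ, rfl⟩
  have h2 := hf.comp h1 hmaps
  have h3 := continuous_ws_to_wd.comp_continuousOn h2
  convert h3 using 1
  rfl




lemma fragmentation {M : Set (WeakDual ℝ X)} (hMc : IsCompact M) (hMne : M.Nonempty)
    {D : Set (WeakDual ℝ X)} (hDc : D.Countable)
    (happrox : ∀ ε > 0, ∀ φ ∈ M, ∃ d ∈ D, wdist φ d ≤ ε)
    {ε : ℝ} (hε : 0 < ε) :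
    ∃ U : Set (WeakDual ℝ X), IsOpen U ∧ (M ∩ U).Nonempty ∧
      ∀ φ ∈ M ∩ U, ∀ χ ∈ M ∩ U, wdist φ χ ≤ ε := by
  have hDne : D.Nonempty := by
    obtain ⟨φ₀, hφ₀⟩ := hMne
    obtain ⟨d, hd, -⟩ := happrox ε hε φ₀ hφ₀
    exact ⟨d, hd⟩
  obtain ⟨f, hf⟩ := Set.Countable.exists_eq_range hDc hDne
  haveI : CompactSpace ↥M := isCompact_iff_compactSpace.mp hMc
  haveI : Nonempty ↥M := hMne.to_subtype
  set C : ℕ → Set ↥M := fun n => {t : ↥M | wdist (t : WeakDual ℝ X) (f n) ≤ ε / 2} with hC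
  have hCcl : ∀ n, IsClosed (C n) := by
    intro n
    exact (isClosed_wdist_le' (f n) (ε / 2)).preimage continuous_subtype_val
  have hCun : ⋃ n, C n = univ := by
    ext t
    simp only [Set.mem_iUnion, Set.mem_univ, iff_true]
    obtain ⟨d, hd, hdist⟩ := happrox (ε / 2) (by linarith) (t : WeakDual ℝ X) t.2
    rw [hf] at hd
    obtain ⟨n, rfl⟩ := hd
    exact ⟨n, hdist⟩
  obtain ⟨n, hn⟩ := nonempty_interior_of_iUnion_of_closed hCcl hCun
  obtain ⟨t₀, ht₀⟩ := hn
  have hmem : C n ∈ 𝓝 t₀ := mem_interior_iff_mem_nhds.mp ht₀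
  rw [nhds_subtype_eq_comap, Filter.mem_comap] at hmem
  obtain ⟨V, hV, hVsub⟩ := hmem
  refine ⟨interior V, isOpen_interior, ⟨(t₀ : WeakDual ℝ X), t₀.2,
    mem_interior_iff_mem_nhds.mpr hV⟩, ?_⟩
  intro φ hφ χ hχ
  have hφ' : (⟨φ, hφ.1⟩ : ↥M) ∈ C n := hVsub (Set.mem_preimage.mpr (interior_subset hφ.2))
  have hχ' : (⟨χ, hχ.1⟩ : ↥M) ∈ C n := hVsub (Set.mem_preimage.mpr (interior_subset hχ.2))
  have h1 : wdist φ (f n) ≤ ε / 2 := hφ'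
  have h2 : wdist χ (f n) ≤ ε / 2 := hχ'
  calc wdist φ χ ≤ wdist φ (f n) + wdist (f n) χ := wdist_triangle _ _ _
  _ ≤ ε / 2 + ε / 2 := add_le_add h1 (by rw [wdist_comm]; exact h2)
  _ = ε := by ring




lemma exists_minimal_invariant {G : Type*} (A : G → WeakDual ℝ X → WeakDual ℝ X)
    {M₀ : Set (WeakDual ℝ X)} (hM₀c : IsCompact M₀) (hM₀ne : M₀.Nonempty)
    (hM₀inv : ∀ g, MapsTo (A g) M₀ M₀) :
    ∃ M, M ⊆ M₀ ∧ M.Nonempty ∧ IsCompact M ∧ (∀ g, MapsTo (A g) M M) ∧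
      ∀ M', M' ⊆ M → M'.Nonempty → IsCompact M' → (∀ g, MapsTo (A g) M' M') → M' = M := by
  set S : Set (Set (WeakDual ℝ X)) :=
    {N | N ⊆ M₀ ∧ N.Nonempty ∧ IsCompact N ∧ ∀ g, MapsTo (A g) N N} with hS
  have H : ∀ c ⊆ S, IsChain (· ⊆ ·) c → c.Nonempty → ∃ lb ∈ S, ∀ s ∈ c, lb ⊆ s := by
    intro c hcS hchain hcne
    haveI : Nonempty ↥c := hcne.to_subtype
    have hdir : DirectedOn (· ⊇ ·) c := by
      intro x hx y hy
      rcases hchain.total hx hy with h | h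
      · exact ⟨x, hx, le_refl _, h⟩
      · exact ⟨y, hy, h, le_refl _⟩
    have hne : (⋂₀ c).Nonempty := by
      apply IsCompact.nonempty_sInter_of_directed_nonempty_isCompact_isClosed hdir
      · exact fun U hU => (hcS hU).2.1
      · exact fun U hU => (hcS hU).2.2.1
      · exact fun U hU => (hcS hU).2.2.1.isClosed
    obtain ⟨N₀, hN₀⟩ := hcne
    refine ⟨⋂₀ c, ⟨?_, hne, ?_, ?_⟩, fun s hs => sInter_subset_of_mem hs⟩
    · exact subset_trans (sInter_subset_of_mem hN₀) (hcS hN₀).1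
    · exact IsCompact.of_isClosed_subset (hcS hN₀).2.2.1
        (isClosed_sInter fun U hU => (hcS hU).2.2.1.isClosed) (sInter_subset_of_mem hN₀)
    · intro g φ hφ
      intro N hN
      exact (hcS hN).2.2.2 g (hφ N hN)
  obtain ⟨M, hMsub, hMmin⟩ := zorn_superset_nonempty S H M₀ ⟨le_refl _, hM₀ne, hM₀c, hM₀inv⟩
  refine ⟨M, hMsub, hMmin.prop.2.1, hMmin.prop.2.2.1, hMmin.prop.2.2.2, ?_⟩
  intro M' hM'sub hM'ne hM'c hM'inv
  have : M' ∈ S := ⟨subset_trans hM'sub hMmin.prop.1, hM'ne, hM'c, hM'inv⟩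
  exact subset_antisymm hM'sub (hMmin.2 this hM'sub)

lemma exists_minimal_invariant_convex {G : Type*} (A : G → WeakDual ℝ X → WeakDual ℝ X)
    {M₀ : Set (WeakDual ℝ X)} (hM₀c : IsCompact M₀) (hM₀ne : M₀.Nonempty)
    (hM₀conv : Convex ℝ M₀) (hM₀inv : ∀ g, MapsTo (A g) M₀ M₀) :
    ∃ M, M ⊆ M₀ ∧ M.Nonempty ∧ IsCompact M ∧ Convex ℝ M ∧ (∀ g, MapsTo (A g) M M) ∧
      ∀ M', M' ⊆ M → M'.Nonempty → IsCompact M' → Convex ℝ M' →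
        (∀ g, MapsTo (A g) M' M') → M' = M := by
  set S : Set (Set (WeakDual ℝ X)) :=
    {N | N ⊆ M₀ ∧ N.Nonempty ∧ IsCompact N ∧ Convex ℝ N ∧ ∀ g, MapsTo (A g) N N} with hS
  have H : ∀ c ⊆ S, IsChain (· ⊆ ·) c → c.Nonempty → ∃ lb ∈ S, ∀ s ∈ c, lb ⊆ s := by
    intro c hcS hchain hcne
    haveI : Nonempty ↥c := hcne.to_subtype
    have hdir : DirectedOn (· ⊇ ·) c := by
      intro x hx y hy
      rcases hchain.total hx hy with h | h
      · exact ⟨x, hx, le_refl _, h⟩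
      · exact ⟨y, hy, h, le_refl _⟩
    have hne : (⋂₀ c).Nonempty := by
      apply IsCompact.nonempty_sInter_of_directed_nonempty_isCompact_isClosed hdir
      · exact fun U hU => (hcS hU).2.1
      · exact fun U hU => (hcS hU).2.2.1
      · exact fun U hU => (hcS hU).2.2.1.isClosed
    obtain ⟨N₀, hN₀⟩ := hcne
    refine ⟨⋂₀ c, ⟨?_, hne, ?_, ?_, ?_⟩, fun s hs => sInter_subset_of_mem hs⟩
    · exact subset_trans (sInter_subset_of_mem hN₀) (hcS hN₀).1
    · exact IsCompact.of_isClosed_subset (hcS hN₀).2.2.1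
        (isClosed_sInter fun U hU => (hcS hU).2.2.1.isClosed) (sInter_subset_of_mem hN₀)
    · exact convex_sInter fun U hU => (hcS hU).2.2.2.1
    · intro g φ hφ N hN
      exact (hcS hN).2.2.2.2 g (hφ N hN)
  obtain ⟨M, hMsub, hMmin⟩ := zorn_superset_nonempty S H M₀
    ⟨le_refl _, hM₀ne, hM₀c, hM₀conv, hM₀inv⟩
  refine ⟨M, hMsub, hMmin.prop.2.1, hMmin.prop.2.2.1, hMmin.prop.2.2.2.1,
    hMmin.prop.2.2.2.2, ?_⟩
  intro M' hM'sub hM'ne hM'c hM'conv hM'inv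
  have : M' ∈ S := ⟨subset_trans hM'sub hMmin.prop.1, hM'ne, hM'c, hM'conv, hM'inv⟩
  exact subset_antisymm hM'sub (hMmin.2 this hM'sub)





lemma ellis_isometry {G : Type*} [Monoid G] (A : G → WeakDual ℝ X → WeakDual ℝ X)
    {Q M : Set (WeakDual ℝ X)} (hMQ : M ⊆ Q)
    (hMc : IsCompact M) (hMne : M.Nonempty) (hMinv : ∀ g, MapsTo (A g) M M)
    (hQmul : ∀ g h, ∀ φ ∈ Q, A (g * h) φ = A g (A h φ))
    (hQone : ∀ φ ∈ Q, A 1 φ = φ)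
    (hcont : ∀ g, ContinuousOn (A g) Q)
    (hnonexp : ∀ g, ∀ φ ∈ Q, ∀ χ ∈ Q, wdist (A g φ) (A g χ) ≤ wdist φ χ)
    (hMmin : ∀ M', M' ⊆ M → M'.Nonempty → IsCompact M' → (∀ g, MapsTo (A g) M' M') → M' = M)
    (hdist : ∀ φ ∈ Q, ∀ χ ∈ Q, φ ≠ χ → ∃ δ > 0, ∀ g, δ ≤ wdist (A g φ) (A g χ))
    (hfrag : ∀ ε > 0, ∃ U : Set (WeakDual ℝ X), IsOpen U ∧ (M ∩ U).Nonempty ∧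
      ∀ φ ∈ M ∩ U, ∀ χ ∈ M ∩ U, wdist φ χ ≤ ε) :
    (∀ g, ∀ φ ∈ M, ∀ χ ∈ M, wdist (A g φ) (A g χ) = wdist φ χ) ∧
      (∀ g, ∀ χ ∈ M, ∃ φ ∈ M, A g φ = χ) := by
  classical
  haveI hTcs : CompactSpace ↥M := isCompact_iff_compactSpace.mp hMc
  haveI : Nonempty ↥M := hMne.to_subtype
  -- the action as self-maps of the subtype
  set F : G → ↥M → ↥M := fun g t => ⟨A g ↑t, hMinv g t.2⟩ with hF
  have hFcont : ∀ g, Continuous (F g) := by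
    intro g
    apply Continuous.subtype_mk
    exact continuousOn_iff_continuous_restrict.mp ((hcont g).mono hMQ)
  have hFmul : ∀ g h, F g ∘ F h = F (g * h) := by
    intro g h
    funext t
    apply Subtype.ext
    exact (hQmul g h ↑t (hMQ t.2)).symm
  -- the Ellis semigroup
  set E : Set (↥M → ↥M) := closure (Set.range F) with hE
  have hErange : Set.range F ⊆ E := subset_closure
  have hEne : E.Nonempty := ⟨F 1, hErange ⟨1, rfl⟩⟩
  have hEclosed : IsClosed E := isClosed_closure
  have hEcompact : IsCompact E := hEclosed.isCompact
  -- E is closed under composition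
  have hEcompF : ∀ g, ∀ q ∈ E, F g ∘ q ∈ E := by
    intro g q hq
    have hΛ : Continuous (fun h : ↥M → ↥M => F g ∘ h) := by
      apply continuous_pi
      intro t
      exact (hFcont g).comp (continuous_apply t)
    have h1 : (fun h : ↥M → ↥M => F g ∘ h) '' Set.range F ⊆ Set.range F := by
      rintro _ ⟨_, ⟨h, rfl⟩, rfl⟩
      exact ⟨g * h, (hFmul g h).symm⟩
    have h2 := image_closure_subset_closure_image (s := Set.range F) hΛ
    have h3 : (fun h : ↥M → ↥M => F g ∘ h) '' E ⊆ E :=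
      h2.trans (closure_mono h1)
    exact h3 ⟨q, hq, rfl⟩
  have hEcomp : ∀ p ∈ E, ∀ q ∈ E, p ∘ q ∈ E := by
    intro p hp q hq
    have hR : Continuous (fun h : ↥M → ↥M => h ∘ q) := by
      apply continuous_pi
      intro t
      exact continuous_apply (q t)
    have h1 : (fun h : ↥M → ↥M => h ∘ q) '' Set.range F ⊆ E := by
      rintro _ ⟨_, ⟨g, rfl⟩, rfl⟩
      exact hEcompF g q hq
    have h2 := image_closure_subset_closure_image (s := Set.range F) hR
    have h3 : (fun h : ↥M → ↥M => h ∘ q) '' E ⊆ E := by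
      refine h2.trans ?_
      have h4 := closure_mono h1
      rwa [hEclosed.closure_eq] at h4
    exact h3 ⟨p, hp, rfl⟩
  -- evaluation of elements of E along pairs stays in orbit closures
  have hpair : ∀ (t₁ t₂ : ↥M) (p : ↥M → ↥M), p ∈ E →
      ((↑(p t₁) : WeakDual ℝ X), (↑(p t₂) : WeakDual ℝ X)) ∈
        closure {pr : WeakDual ℝ X × WeakDual ℝ X |
          ∃ g, pr = (A g ↑t₁, A g ↑t₂)} := by
    intro t₁ t₂ p hp
    have hev : Continuous (fun h : ↥M → ↥M =>
        ((↑(h t₁) : WeakDual ℝ X), (↑(h t₂) : WeakDual ℝ X))) := by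
      apply Continuous.prodMk
      · exact continuous_subtype_val.comp (continuous_apply t₁)
      · exact continuous_subtype_val.comp (continuous_apply t₂)
    have h1 : (fun h : ↥M → ↥M =>
        ((↑(h t₁) : WeakDual ℝ X), (↑(h t₂) : WeakDual ℝ X))) '' Set.range F ⊆
        {pr : WeakDual ℝ X × WeakDual ℝ X | ∃ g, pr = (A g ↑t₁, A g ↑t₂)} := by
      rintro _ ⟨_, ⟨g, rfl⟩, rfl⟩
      exact ⟨g, rfl⟩
    have h2 := image_closure_subset_closure_image (s := Set.range F) hev
    have h3 := h2.trans (closure_mono h1)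
    exact h3 ⟨p, hp, rfl⟩
  -- idempotents of E are the identity
  have hidem : ∀ u, u ∈ E → u ∘ u = u → u = id := by
    intro u huE huu
    by_contra hne
    have : ∃ t₀ : ↥M, u t₀ ≠ t₀ := by
      by_contra h
      push_neg at h
      exact hne (funext fun t => h t)
    obtain ⟨t₀, ht₀⟩ := this
    set a : WeakDual ℝ X := ↑t₀ with ha
    set tb : ↥M := u t₀ with htb
    set b : WeakDual ℝ X := ↑tb with hb
    have hab : a ≠ b := fun h => ht₀ (Subtype.ext h).symm
    obtain ⟨δ, hδpos, hδ⟩ := hdist a (hMQ t₀.2) b (hMQ tb.2) hab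
    set Γ : Set (WeakDual ℝ X × WeakDual ℝ X) :=
      closure {pr | ∃ g, pr = (A g a, A g b)} with hΓ
    have hbb : (b, b) ∈ Γ := by
      have := hpair t₀ tb u huE
      have hutb : u tb = tb := by
        rw [htb]
        exact congrFun huu t₀
      rw [← htb, hutb] at this
      exact this
    -- Γ is contained in M × M
    have hΓMM : Γ ⊆ M ×ˢ M := by
      apply closure_minimal
      · rintro _ ⟨g, rfl⟩
        exact ⟨hMinv g t₀.2, hMinv g tb.2⟩
      · exact (hMc.prod hMc).isClosed
    -- the diagonal part of Γ projects to an invariant subset of M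
    set M₁ : Set (WeakDual ℝ X) := {m | m ∈ M ∧ (m, m) ∈ Γ} with hM₁
    have hM₁eq : M₁ = M := by
      apply hMmin
      · exact fun m hm => hm.1
      · exact ⟨b, tb.2, hbb⟩
      · have : M₁ = M ∩ ((fun m : WeakDual ℝ X => (m, m)) ⁻¹' Γ) := rfl
        rw [this]
        exact hMc.inter_right (isClosed_closure.preimage (continuous_id.prodMk continuous_id))
      · intro g m hm
        refine ⟨hMinv g hm.1, ?_⟩
        have hcont2 : ContinuousOn (fun pr : WeakDual ℝ X × WeakDual ℝ X =>
            (A g pr.1, A g pr.2)) (M ×ˢ M) := by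
          apply ContinuousOn.prodMk
          · exact ((hcont g).mono hMQ).comp continuousOn_fst fun pr hpr => hpr.1
          · exact ((hcont g).mono hMQ).comp continuousOn_snd fun pr hpr => hpr.2
        have himg : (fun pr : WeakDual ℝ X × WeakDual ℝ X => (A g pr.1, A g pr.2)) '' Γ ⊆ Γ := by
          have hΓcl : Γ = closure {pr : WeakDual ℝ X × WeakDual ℝ X |
              ∃ h, pr = (A h a, A h b)} := rfl
          have hco : ContinuousOn (fun pr : WeakDual ℝ X × WeakDual ℝ X =>
              (A g pr.1, A g pr.2)) Γ := hcont2.mono hΓMM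
          have h1 : (fun pr : WeakDual ℝ X × WeakDual ℝ X => (A g pr.1, A g pr.2)) '' Γ ⊆
              closure ((fun pr : WeakDual ℝ X × WeakDual ℝ X => (A g pr.1, A g pr.2)) ''
                {pr : WeakDual ℝ X × WeakDual ℝ X | ∃ h, pr = (A h a, A h b)}) :=
            ContinuousOn.image_closure hco
          refine h1.trans ?_
          rw [hΓcl]
          apply closure_mono
          rintro _ ⟨_, ⟨h, rfl⟩, rfl⟩
          refine ⟨g * h, ?_⟩
          have e1 : A (g * h) a = A g (A h a) := hQmul g h a (hMQ t₀.2)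
          have e2 : A (g * h) b = A g (A h b) := hQmul g h b (hMQ tb.2)
          rw [e1, e2]
        exact himg ⟨(m, m), hm.2, rfl⟩
    -- now use the fragmentation slice
    obtain ⟨U, hUopen, hUne, hUdiam⟩ := hfrag (δ / 2) (by linarith)
    obtain ⟨m₀, hm₀M, hm₀U⟩ := hUne
    have hm₀Γ : (m₀, m₀) ∈ Γ := by
      rw [← hM₁eq] at hm₀M
      exact hm₀M.2
    have hopen : IsOpen (U ×ˢ U) := hUopen.prod hUopen
    have hmem : (m₀, m₀) ∈ U ×ˢ U := ⟨hm₀U, hm₀U⟩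
    have hne2 := _root_.mem_closure_iff.mp hm₀Γ (U ×ˢ U) hopen hmem
    obtain ⟨pr, hprU, g, rfl⟩ := hne2
    have h1 : A g a ∈ M ∩ U := ⟨hMinv g t₀.2, hprU.1⟩
    have h2 : A g b ∈ M ∩ U := ⟨hMinv g tb.2, hprU.2⟩
    have h3 : wdist (A g a) (A g b) ≤ δ / 2 := hUdiam _ h1 _ h2
    have h4 : δ ≤ wdist (A g a) (A g b) := hδ g
    linarith
  -- every element of E has a left inverse in E
  have hinv : ∀ p ∈ E, ∃ q ∈ E, q ∘ p = id := by
    intro p hp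
    set A' : Set (↥M → ↥M) := (fun h => h ∘ p) '' E with hA'
    have hA'E : A' ⊆ E := by
      rintro _ ⟨q, hq, rfl⟩
      exact hEcomp q hq p hp
    have hA'c : IsCompact A' := by
      apply hEcompact.image
      apply continuous_pi
      intro t
      exact continuous_apply (p t)
    have hA'ne : A'.Nonempty := ⟨_, ⟨F 1, hErange ⟨1, rfl⟩, rfl⟩⟩
    have hA'mul : ∀ f ∈ A', ∀ g ∈ A', f ∘ g ∈ A' := by
      rintro _ ⟨q₁, hq₁, rfl⟩ _ ⟨q₂, hq₂, rfl⟩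
      refine ⟨q₁ ∘ (p ∘ q₂), ?_, rfl⟩
      exact hEcomp q₁ hq₁ _ (hEcomp p hp q₂ hq₂)
    haveI : Nonempty ↥A' := hA'ne.to_subtype
    haveI hA'cs : CompactSpace ↥A' := isCompact_iff_compactSpace.mp hA'c
    letI : Mul ↥A' := ⟨fun f g => ⟨f.1 ∘ g.1, hA'mul f.1 f.2 g.1 g.2⟩⟩
    letI : Semigroup ↥A' :=
      { mul_assoc := by
          intro f g h
          apply Subtype.ext
          rfl }
    have hmul_left : ∀ r : ↥A', Continuous (· * r) := by
      intro r
      apply Continuous.subtype_mk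
      have : (fun f : ↥A' => f.1 ∘ r.1) = (fun h : ↥M → ↥M => h ∘ r.1) ∘ Subtype.val := rfl
      rw [this]
      refine Continuous.comp ?_ continuous_subtype_val
      apply continuous_pi
      intro t
      exact continuous_apply (r.1 t)
    obtain ⟨m, hm⟩ := exists_idempotent_of_compact_t2_of_continuous_mul_left hmul_left
    have hm1 : m.1 ∘ m.1 = m.1 := congrArg Subtype.val hm
    have hmid : m.1 = id := hidem m.1 (hA'E m.2) hm1
    obtain ⟨q, hq, hqp⟩ := m.2
    have hqp' : q ∘ p = (m : ↥M → ↥M) := hqp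
    exact ⟨q, hq, by rw [hqp', hmid]⟩
  constructor
  · -- isometry
    intro g φ hφ χ hχ
    refine le_antisymm (hnonexp g φ (hMQ hφ) χ (hMQ hχ)) ?_
    obtain ⟨q, hqE, hqp⟩ := hinv (F g) (hErange ⟨g, rfl⟩)
    have htφ : φ ∈ M := hφ
    have htχ : χ ∈ M := hχ
    let tφ : ↥M := ⟨φ, hφ⟩
    let tχ : ↥M := ⟨χ, hχ⟩
    let t₁ : ↥M := ⟨A g φ, hMinv g hφ⟩
    let t₂ : ↥M := ⟨A g χ, hMinv g hχ⟩
    have he₁ : F g tφ = t₁ := Subtype.ext rfl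
    have he₂ : F g tχ = t₂ := Subtype.ext rfl
    have h1 := hpair t₁ t₂ q hqE
    have h2 : q t₁ = tφ := by rw [← he₁]; exact congrFun hqp tφ
    have h3 : q t₂ = tχ := by rw [← he₂]; exact congrFun hqp tχ
    rw [h2, h3] at h1
    have h4 : closure {pr : WeakDual ℝ X × WeakDual ℝ X |
        ∃ h, pr = (A h (↑t₁ : WeakDual ℝ X), A h (↑t₂ : WeakDual ℝ X))} ⊆
        {pr : WeakDual ℝ X × WeakDual ℝ X | wdist pr.1 pr.2 ≤ wdist (A g φ) (A g χ)} := by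
      apply closure_minimal
      · rintro _ ⟨h, rfl⟩
        exact hnonexp h _ (hMQ (hMinv g hφ)) _ (hMQ (hMinv g hχ))
      · exact isClosed_wdist_le (wdist (A g φ) (A g χ))
    exact h4 h1
  · -- surjectivity
    intro g χ hχ
    obtain ⟨q, hqE, hqp⟩ := hinv (F g) (hErange ⟨g, rfl⟩)
    obtain ⟨w, hwE, hwq⟩ := hinv q hqE
    have hpq : F g ∘ q = id := by
      have : w = F g := by
        calc w = w ∘ (q ∘ F g) := by rw [hqp]; rfl
        _ = (w ∘ q) ∘ F g := rfl
        _ = F g := by rw [hwq]; rfl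
      rw [← this, hwq]
    set tχ : ↥M := ⟨χ, hχ⟩ with htχ
    refine ⟨↑(q tχ), (q tχ).2, ?_⟩
    have : F g (q tχ) = tχ := congrFun hpq tχ
    exact congrArg Subtype.val this


theorem aux [CompleteSpace X]
    (hrefl : Function.Surjective (inclusionInDoubleDual ℝ X))
    {G : Type*} [Monoid G] [Countable G] (A : G → WeakDual ℝ X → WeakDual ℝ X)
    {Q : Set (WeakDual ℝ X)} (hQc : IsCompact Q) (hQconv : Convex ℝ Q) (hQne : Q.Nonempty)
    (hmaps : ∀ g, MapsTo (A g) Q Q)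
    (hmul : ∀ g h, ∀ φ ∈ Q, A (g * h) φ = A g (A h φ))
    (hone : ∀ φ ∈ Q, A 1 φ = φ)
    (hcont : ∀ g, ContinuousOn (A g) Q)
    (hnonexp : ∀ g, ∀ φ ∈ Q, ∀ χ ∈ Q, wdist (A g φ) (A g χ) ≤ wdist φ χ)
    (hdist : ∀ φ ∈ Q, ∀ χ ∈ Q, φ ≠ χ → ∃ δ > 0, ∀ g, δ ≤ wdist (A g φ) (A g χ)) :
    ∃ ψ ∈ Q, ∀ g, A g ψ = ψ := by
  classical
  obtain ⟨R, hR⟩ := bounded_of_wdCompact hQc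
  -- minimal invariant compact convex subset
  obtain ⟨K, hKQ, hKne, hKc, hKconv, hKinv, hKmin⟩ :=
    exists_minimal_invariant_convex A hQc hQne hQconv hmaps
  obtain ⟨φ₀, hφ₀K⟩ := hKne
  have hφ₀Q : φ₀ ∈ Q := hKQ hφ₀K
  -- minimal invariant compact subset of the orbit closure of φ₀
  have horbclosure : ∀ φ ∈ Q, ∀ N : Set (WeakDual ℝ X), N = closure (range fun g => A g φ) →
      (∀ g, MapsTo (A g) N N) := by
    intro φ hφQ N hN g χ hχ
    subst hN
    have hrange : (range fun g => A g φ) ⊆ Q := by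
      rintro _ ⟨h, rfl⟩
      exact hmaps h hφQ
    have hclQ : closure (range fun g => A g φ) ⊆ Q := closure_minimal hrange hQc.isClosed
    have hco : ContinuousOn (A g) (closure (range fun g => A g φ)) := (hcont g).mono hclQ
    have h1 := ContinuousOn.image_closure (f := A g) (s := range fun g => A g φ) hco
    have h2 : (A g) '' (range fun g => A g φ) ⊆ (range fun g => A g φ) := by
      rintro _ ⟨_, ⟨h, rfl⟩, rfl⟩
      exact ⟨g * h, hmul g h φ hφQ⟩
    exact (h1.trans (closure_mono h2)) ⟨χ, hχ, rfl⟩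
  set Orb : Set (WeakDual ℝ X) := range (fun g => A g φ₀) with hOrb
  have hOrbK : Orb ⊆ K := by rintro _ ⟨g, rfl⟩; exact hKinv g hφ₀K
  set M₀ : Set (WeakDual ℝ X) := closure Orb with hM₀
  have hM₀K : M₀ ⊆ K := closure_minimal hOrbK hKc.isClosed
  have hM₀c : IsCompact M₀ := IsCompact.of_isClosed_subset hKc isClosed_closure hM₀K
  have hM₀ne : M₀.Nonempty := ⟨φ₀, subset_closure ⟨1, hone φ₀ hφ₀Q⟩⟩
  have hM₀inv : ∀ g, MapsTo (A g) M₀ M₀ := horbclosure φ₀ hφ₀Q M₀ rfl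
  obtain ⟨M, hMM₀, hMne, hMc, hMinv, hMmin⟩ := exists_minimal_invariant A hM₀c hM₀ne hM₀inv
  have hMK : M ⊆ K := hMM₀.trans hM₀K
  have hMQ : M ⊆ Q := hMK.trans hKQ
  -- fragmentation data for M
  have hOc : Orb.Countable := countable_range _
  set O' : Set (StrongDual ℝ X) := WeakDual.toStrongDual '' Orb with hO'
  have hO'c : O'.Countable := hOc.image _
  have himgO : StrongDual.toWeakDual '' O' = Orb := by
    ext ψ
    constructor
    · rintro ⟨_, ⟨χ, hχ, rfl⟩, rfl⟩
      exact hχ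
    · intro h
      exact ⟨WeakDual.toStrongDual ψ, ⟨ψ, h, rfl⟩, rfl⟩
  have hMsub : M ⊆ closure (StrongDual.toWeakDual '' O') := by
    rw [himgO]; exact hMM₀
  obtain ⟨D, hDc, hD⟩ := countable_approx hrefl hO'c hMsub
  have hfrag : ∀ ε > 0, ∃ U : Set (WeakDual ℝ X), IsOpen U ∧ (M ∩ U).Nonempty ∧
      ∀ φ ∈ M ∩ U, ∀ χ ∈ M ∩ U, wdist φ χ ≤ ε :=
    fun ε hε => fragmentation hMc hMne hDc hD hε
  -- Ellis: the action is by surjective isometries on M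
  obtain ⟨hiso, hsurj⟩ :=
    ellis_isometry A hMQ hMc hMne hMinv hmul hone hcont hnonexp hMmin hdist hfrag
  -- Chebyshev radius of M relative to K
  set Rad : ℝ → Set (WeakDual ℝ X) := fun c => {ψ | ∀ m ∈ M, wdist ψ m ≤ c} with hRad
  have hRadcl : ∀ c, IsClosed (Rad c) := by
    intro c
    have : Rad c = ⋂ m ∈ M, {ψ : WeakDual ℝ X | wdist ψ m ≤ c} := by
      ext ψ; simp [hRad, Set.mem_iInter]
    rw [this]
    exact isClosed_biInter fun m _ => isClosed_wdist_le' m c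
  have hRadmono : ∀ c c', c ≤ c' → Rad c ⊆ Rad c' := by
    intro c c' hcc ψ hψ m hm
    exact le_trans (hψ m hm) hcc
  have hRadconv : ∀ c, Convex ℝ (Rad c) := by
    intro c ψ hψ ψ' hψ' a b ha hb hab
    intro m hm
    calc wdist (a • ψ + b • ψ') m ≤ a * wdist ψ m + b * wdist ψ' m :=
          wdist_convex_comb ha hb hab ψ ψ' m
    _ ≤ a * c + b * c := by
        have h1 := mul_le_mul_of_nonneg_left (hψ m hm) ha
        have h2 := mul_le_mul_of_nonneg_left (hψ' m hm) hb
        linarith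
    _ = c := by rw [← add_mul, hab, one_mul]
  set S₀ : Set ℝ := {c | 0 ≤ c ∧ (K ∩ Rad c).Nonempty} with hS₀
  have hS₀ne : S₀.Nonempty := by
    refine ⟨max R 0, le_max_right _ _, φ₀, hφ₀K, fun m hm => ?_⟩
    exact le_trans (hR φ₀ hφ₀Q m (hMQ hm)) (le_max_left _ _)
  have hS₀bdd : BddBelow S₀ := ⟨0, fun c hc => hc.1⟩
  set r₀ : ℝ := sInf S₀ with hr₀def
  have hr₀0 : 0 ≤ r₀ := le_csInf hS₀ne (fun c hc => hc.1)
  have hRadne : ∀ c, r₀ < c → (K ∩ Rad c).Nonempty := by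
    intro c hc
    obtain ⟨c', hc'S, hc'lt⟩ := exists_lt_of_csInf_lt hS₀ne hc
    obtain ⟨ψ, hψK, hψR⟩ := hc'S.2
    exact ⟨ψ, hψK, hRadmono _ _ (le_of_lt hc'lt) hψR⟩
  have hAcheb_ne : (K ∩ Rad r₀).Nonempty := by
    have h1 : ∀ n : ℕ, (K ∩ Rad (r₀ + 1 / (n + 1))).Nonempty := by
      intro n
      refine hRadne _ (lt_add_of_pos_right _ ?_)
      positivity
    have h2 : (⋂ n : ℕ, (K ∩ Rad (r₀ + 1 / (n + 1)))) ⊆ K ∩ Rad r₀ := by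
      intro ψ hψ
      have h3 := Set.mem_iInter.mp hψ 0
      refine ⟨h3.1, fun m hm => ?_⟩
      refine le_of_forall_pos_le_add fun η hη => ?_
      obtain ⟨n, hn⟩ := exists_nat_one_div_lt hη
      have h4 := (Set.mem_iInter.mp hψ n).2 m hm
      have h5 : (1 : ℝ) / (n + 1) ≤ η := le_of_lt (by exact_mod_cast hn)
      linarith
    refine Set.Nonempty.mono h2 ?_
    apply IsCompact.nonempty_iInter_of_directed_nonempty_isCompact_isClosed
    · intro i j
      have key : ∀ a b : ℕ, a ≤ b → r₀ + 1 / ((b : ℝ) + 1) ≤ r₀ + 1 / ((a : ℝ) + 1) := by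
        intro a b hab
        have h1 : (0 : ℝ) < (a : ℝ) + 1 := by positivity
        have h2 : ((a : ℝ) + 1) ≤ ((b : ℝ) + 1) := by
          have : (a : ℝ) ≤ b := by exact_mod_cast hab
          linarith
        have := one_div_le_one_div_of_le h1 h2
        linarith
      exact ⟨max i j,
        Set.inter_subset_inter subset_rfl (hRadmono _ _ (key i _ (le_max_left i j))),
        Set.inter_subset_inter subset_rfl (hRadmono _ _ (key j _ (le_max_right i j)))⟩
    · exact h1
    · exact fun n => hKc.inter_right (hRadcl _)
    · exact fun n => (hKc.inter_right (hRadcl _)).isClosed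
  have hAcheb_eq : K ∩ Rad r₀ = K := by
    apply hKmin
    · exact Set.inter_subset_left
    · exact hAcheb_ne
    · exact hKc.inter_right (hRadcl _)
    · exact hKconv.inter (hRadconv _)
    · intro g ψ hψ
      refine ⟨hKinv g hψ.1, fun m hm => ?_⟩
      obtain ⟨m', hm', rfl⟩ := hsurj g m hm
      exact le_trans (hnonexp g ψ (hKQ hψ.1) m' (hMQ hm')) (hψ.2 m' hm')
  have hall : ∀ ψ ∈ K, ∀ m ∈ M, wdist ψ m ≤ r₀ := by
    intro ψ hψ
    have : ψ ∈ K ∩ Rad r₀ := by rw [hAcheb_eq]; exact hψ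
    exact this.2
  have hbest : ∀ ψ ∈ K, ∀ ε > 0, ∃ m ∈ M, r₀ - ε < wdist ψ m := by
    intro ψ hψ ε hε
    by_contra h
    push_neg at h
    obtain ⟨m₁, hm₁⟩ := hMne
    have h0 : 0 ≤ r₀ - ε := le_trans (wdist_nonneg ψ m₁) (h m₁ hm₁)
    have hmem : r₀ - ε ∈ S₀ := ⟨h0, ψ, hψ, fun m hm => h m hm⟩
    have := csInf_le hS₀bdd hmem
    linarith
  -- case split on r₀
  rcases eq_or_lt_of_le hr₀0 with hr₀ | hr₀pos
  · -- r₀ = 0 : K is a single point, which is fixed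
    obtain ⟨m₀, hm₀⟩ := hMne
    have hKsing : ∀ ψ ∈ K, ψ = m₀ := by
      intro ψ hψ
      have h1 : wdist ψ m₀ ≤ r₀ := hall ψ hψ m₀ hm₀
      rw [← hr₀] at h1
      exact wdist_eq_zero_iff.mp (le_antisymm h1 (wdist_nonneg _ _))
    refine ⟨m₀, hMQ hm₀, fun g => ?_⟩
    exact hKsing _ (hKinv g (hMK hm₀))
  · -- r₀ > 0 : contradiction with fragmentation + isometry
    exfalso
    obtain ⟨U, hUopen, hUne, hUdiam⟩ := hfrag (r₀ / 5) (by linarith)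
    have hcover : ∀ φ ∈ M, ∃ g, A g φ ∈ U := by
      intro φ hφ
      have horb : closure (range fun g => A g φ) = M := by
        apply hMmin
        · exact closure_minimal (by rintro _ ⟨g, rfl⟩; exact hMinv g hφ) hMc.isClosed
        · exact ⟨φ, subset_closure ⟨1, hone φ (hMQ hφ)⟩⟩
        · exact IsCompact.of_isClosed_subset hMc isClosed_closure
            (closure_minimal (by rintro _ ⟨g, rfl⟩; exact hMinv g hφ) hMc.isClosed)
        · exact horbclosure φ (hMQ hφ) _ rfl
      obtain ⟨v, hvM, hvU⟩ := hUne
      have hv : v ∈ closure (range fun g => A g φ) := by rw [horb]; exact hvM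
      have := _root_.mem_closure_iff.mp hv U hUopen hvU
      obtain ⟨_, hwU, g, rfl⟩ := this
      exact ⟨g, hwU⟩
    haveI : CompactSpace ↥M := isCompact_iff_compactSpace.mp hMc
    have hsub : (univ : Set ↥M) ⊆ ⋃ g : G, (fun t : ↥M => A g ↑t) ⁻¹' U := by
      intro t _
      obtain ⟨g, hg⟩ := hcover ↑t t.2
      exact Set.mem_iUnion.mpr ⟨g, hg⟩
    have hopens : ∀ g : G, IsOpen ((fun t : ↥M => A g ↑t) ⁻¹' U) := by
      intro g
      apply IsOpen.preimage ?_ hUopen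
      exact continuousOn_iff_continuous_restrict.mp ((hcont g).mono hMQ)
    obtain ⟨s, hs⟩ := isCompact_univ.elim_finite_subcover
      (fun g : G => (fun t : ↥M => A g ↑t) ⁻¹' U) hopens hsub
    -- a (s.card + 1)-point separated family in M
    have hsep : ∀ n : ℕ, ∃ f : Fin n → WeakDual ℝ X,
        (∀ i, f i ∈ M) ∧ ∀ i j, i ≠ j → r₀ / 2 ≤ wdist (f i) (f j) := by
      intro n
      induction n with
      | zero => exact ⟨fun i => i.elim0, fun i => i.elim0, fun i => i.elim0⟩
      | succ n ih =>
        obtain ⟨f, hfM, hfsep⟩ := ih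
        rcases Nat.eq_zero_or_pos n with h0 | hn
        · subst h0
          obtain ⟨m₁, hm₁⟩ := hMne
          refine ⟨fun _ => m₁, fun _ => hm₁, fun i j hij => ?_⟩
          exact absurd (Fin.ext (by omega)) hij
        · have hcent : ((n : ℝ)⁻¹ • ∑ i, f i) ∈ K :=
            centroid_mem_convex hn hKconv f (fun i => hMK (hfM i))
          have hεpos : (0 : ℝ) < r₀ / (2 * n) := by positivity
          obtain ⟨m, hmM, hmfar⟩ := hbest _ hcent (r₀ / (2 * n)) hεpos
          refine ⟨Fin.snoc f m, ?_, ?_⟩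
          · intro i
            rcases Fin.eq_castSucc_or_eq_last i with ⟨k, rfl⟩ | rfl
            · rw [Fin.snoc_castSucc]; exact hfM k
            · rw [Fin.snoc_last]; exact hmM
          · have hkey : ∀ i : Fin n, r₀ / 2 ≤ wdist (f i) m := by
              intro i
              have h1 : wdist ((n : ℝ)⁻¹ • ∑ k, f k) m ≤ (n : ℝ)⁻¹ * ∑ k, wdist (f k) m :=
                wdist_centroid hn f m
              have h2 : ∑ k, wdist (f k) m ≤ wdist (f i) m + ((n : ℝ) - 1) * r₀ := by
                have h3 : ∑ k, wdist (f k) m =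
                    wdist (f i) m + ∑ k ∈ Finset.univ.erase i, wdist (f k) m := by
                  rw [← Finset.add_sum_erase _ _ (Finset.mem_univ i)]
                rw [h3]
                have h4 : ∑ k ∈ Finset.univ.erase i, wdist (f k) m ≤ ((n : ℝ) - 1) * r₀ := by
                  have h5 : ∀ k ∈ Finset.univ.erase i, wdist (f k) m ≤ r₀ :=
                    fun k _ => hall _ (hMK (hfM k)) m hmM
                  have h6 := Finset.sum_le_sum h5
                  rw [Finset.sum_const] at h6
                  have h7 : (Finset.univ.erase i).card = n - 1 := by
                    rw [Finset.card_erase_of_mem (Finset.mem_univ i), Finset.card_univ,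
                      Fintype.card_fin]
                  rw [h7] at h6
                  refine le_trans h6 ?_
                  rw [nsmul_eq_mul]
                  have : ((n - 1 : ℕ) : ℝ) = (n : ℝ) - 1 := by
                    have : (1 : ℕ) ≤ n := hn
                    push_cast [Nat.cast_sub this]
                    ring
                  rw [this]
                linarith
              have hn' : (0 : ℝ) < n := Nat.cast_pos.mpr hn
              have h8 : r₀ - r₀ / (2 * n) < (n : ℝ)⁻¹ * (wdist (f i) m + ((n : ℝ) - 1) * r₀) := by
                refine lt_of_lt_of_le hmfar (le_trans h1 ?_)
                exact mul_le_mul_of_nonneg_left h2 (le_of_lt (inv_pos.mpr hn'))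
              have h9 : (n : ℝ) * (r₀ - r₀ / (2 * n)) < wdist (f i) m + ((n : ℝ) - 1) * r₀ := by
                have := mul_lt_mul_of_pos_left h8 hn'
                rwa [← mul_assoc, mul_inv_cancel₀ (ne_of_gt hn'), one_mul] at this
              have h10 : (n : ℝ) * (r₀ / (2 * n)) = r₀ / 2 := by
                field_simp
              nlinarith
            intro i j hij
            rcases Fin.eq_castSucc_or_eq_last i with ⟨k, rfl⟩ | rfl <;>
              rcases Fin.eq_castSucc_or_eq_last j with ⟨k', rfl⟩ | rfl
            · rw [Fin.snoc_castSucc, Fin.snoc_castSucc]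
              exact hfsep k k' (fun h => hij (by rw [h]))
            · rw [Fin.snoc_castSucc, Fin.snoc_last]
              exact hkey k
            · rw [Fin.snoc_last, Fin.snoc_castSucc, wdist_comm]
              exact hkey k'
            · exact absurd rfl hij
    -- pigeonhole: two of the separated points fall in the same piece of the cover
    obtain ⟨f, hfM, hfsep⟩ := hsep (s.card + 1)
    have hpiece : ∀ i : Fin (s.card + 1), ∃ g ∈ s, A g (f i) ∈ U := by
      intro i
      have := hs (Set.mem_univ (⟨f i, hfM i⟩ : ↥M))
      rw [Set.mem_iUnion₂] at this
      obtain ⟨g, hgs, hg⟩ := this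
      exact ⟨g, hgs, hg⟩
    choose gi hgis hgiU using hpiece
    have hcard : s.card < (Finset.univ : Finset (Fin (s.card + 1))).card := by
      rw [Finset.card_univ, Fintype.card_fin]
      omega
    obtain ⟨i, -, j, -, hij, hg⟩ :=
      Finset.exists_ne_map_eq_of_card_lt_of_maps_to hcard (fun i _ => hgis i)
    have h1 : A (gi i) (f i) ∈ M ∩ U := ⟨hMinv _ (hfM i), hgiU i⟩
    have h2 : A (gi i) (f j) ∈ M ∩ U := ⟨hMinv _ (hfM j), by rw [hg]; exact hgiU j⟩
    have h3 : wdist (A (gi i) (f i)) (A (gi i) (f j)) ≤ r₀ / 5 := hUdiam _ h1 _ h2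
    have h4 : wdist (A (gi i) (f i)) (A (gi i) (f j)) = wdist (f i) (f j) :=
      hiso _ _ (hfM i) _ (hfM j)
    have h5 := hfsep i j hij
    rw [h4] at h3
    linarith
end NFT


/-- **A nonlinear extension of Fan's theorem.**
Let `X` be a reflexive Banach space, `z ∈ X` with `‖z‖ = 1`, and
`Q = {φ ∈ X* : ‖φ‖ = φ(z) = 1}`.  If `(S, (Q, weak))` is a norm-nonexpansive and
non-deflating dynamical system, then there exists `ψ ∈ Q` with `sψ = ψ` for all
`s ∈ S`. -/
theorem nonlinear_fan_theorem
    {X : Type*} [NormedAddCommGroup X] [NormedSpace ℝ X] [CompleteSpace X]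
    -- `X` is reflexive
    (hrefl : Function.Surjective (inclusionInDoubleDual ℝ X))
    (z : X) (hz : ‖z‖ = 1)
    {S : Type*} [Semigroup S] (act : S → StrongDual ℝ X → StrongDual ℝ X)
    -- `(S, Q)` is a dynamical system for the weak topology of `X*` on
    -- `Q = {φ : ‖φ‖ = φ(z) = 1}`
    (hmaps : ∀ s : S, Set.MapsTo (act s) {φ : StrongDual ℝ X | ‖φ‖ = 1 ∧ φ z = 1}
      {φ : StrongDual ℝ X | ‖φ‖ = 1 ∧ φ z = 1})
    (hact : ∀ s t : S, ∀ φ ∈ {φ : StrongDual ℝ X | ‖φ‖ = 1 ∧ φ z = 1},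
      act (s * t) φ = act s (act t φ))
    (hcont : ∀ s : S, ContinuousOn
      (fun φ : WeakSpace ℝ (StrongDual ℝ X) =>
        toWeakSpace ℝ (StrongDual ℝ X) (act s ((toWeakSpace ℝ (StrongDual ℝ X)).symm φ)))
      (toWeakSpace ℝ (StrongDual ℝ X) '' {φ : StrongDual ℝ X | ‖φ‖ = 1 ∧ φ z = 1}))
    -- norm-nonexpansive
    (hnonexp : ∀ s : S, ∀ φ ∈ {φ : StrongDual ℝ X | ‖φ‖ = 1 ∧ φ z = 1},
      ∀ χ ∈ {φ : StrongDual ℝ X | ‖φ‖ = 1 ∧ φ z = 1}, ‖act s φ - act s χ‖ ≤ ‖φ - χ‖)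
    -- non-deflating
    (hnondefl : ¬ ∃ φ₁ ∈ {φ : StrongDual ℝ X | ‖φ‖ = 1 ∧ φ z = 1},
      ∃ φ₂ ∈ {φ : StrongDual ℝ X | ‖φ‖ = 1 ∧ φ z = 1}, φ₁ ≠ φ₂ ∧
        ∀ C : Set X, Convex ℝ C → Balanced ℝ C → IsCompact (toWeakSpace ℝ X '' C) →
          ∀ ε > (0 : ℝ), ∃ s : S, ∀ y ∈ C, |act s φ₁ y - act s φ₂ y| < ε) :
    ∃ ψ : StrongDual ℝ X, (‖ψ‖ = 1 ∧ ψ z = 1) ∧ ∀ s : S, act s ψ = ψ := by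
  classical
  set Qs : Set (StrongDual ℝ X) := {φ : StrongDual ℝ X | ‖φ‖ = 1 ∧ φ z = 1} with hQs
  -- distality from non-deflating
  have hdistFull : ∀ φ ∈ Qs, ∀ χ ∈ Qs, φ ≠ χ →
      ∃ δ > 0, δ ≤ ‖φ - χ‖ ∧ ∀ s : S, δ ≤ ‖act s φ - act s χ‖ := by
    intro φ hφ χ hχ hne
    by_contra hcon
    push_neg at hcon
    apply hnondefl
    refine ⟨φ, hφ, χ, hχ, hne, ?_⟩
    intro C _ _ hCcpt ε hε
    obtain ⟨R, hR0, hRb⟩ := NFT.bounded_of_weaklyCompact hCcpt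
    have hφχ : 0 < ‖φ - χ‖ := by
      rw [norm_pos_iff, sub_ne_zero]
      exact hne
    set δ : ℝ := min (ε / (R + 1)) ‖φ - χ‖ with hδ
    have hδpos : 0 < δ := lt_min (by positivity) hφχ
    obtain ⟨s, hslt⟩ := hcon δ hδpos (min_le_right _ _)
    refine ⟨s, fun y hy => ?_⟩
    have h1 : |act s φ y - act s χ y| ≤ ‖act s φ - act s χ‖ * ‖y‖ := by
      have h0 := (act s φ - act s χ).le_opNorm y
      rw [ContinuousLinearMap.sub_apply] at h0
      rwa [← Real.norm_eq_abs]
    have h2 : ‖act s φ - act s χ‖ * ‖y‖ < ε := by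
      have ha : ‖act s φ - act s χ‖ * ‖y‖ ≤ δ * R := by
        apply mul_le_mul (le_of_lt hslt) (hRb y hy) (norm_nonneg y) (le_of_lt hδpos)
      have hb : δ * R ≤ (ε / (R + 1)) * R :=
        mul_le_mul_of_nonneg_right (min_le_left _ _) hR0
      have hc : (ε / (R + 1)) * R < ε := by
        rw [div_mul_eq_mul_div, div_lt_iff₀ (by positivity : (0:ℝ) < R + 1)]
        nlinarith
      linarith
    exact lt_of_le_of_lt h1 h2
  -- translate everything to the weak-star dual
  set actw : S → WeakDual ℝ X → WeakDual ℝ X :=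
    fun s φ => StrongDual.toWeakDual (act s (WeakDual.toStrongDual φ)) with hactwdef
  have hmemw : ∀ φ : WeakDual ℝ X, φ ∈ NFT.Qw z ↔ WeakDual.toStrongDual φ ∈ Qs := fun φ => Iff.rfl
  have hmapsw : ∀ s, MapsTo (actw s) (NFT.Qw z) (NFT.Qw z) := by
    intro s φ hφ
    exact (hmemw _).mpr (hmaps s ((hmemw φ).mp hφ))
  have hactw : ∀ s t : S, ∀ φ ∈ NFT.Qw z, actw (s * t) φ = actw s (actw t φ) := by
    intro s t φ hφ
    have := hact s t (WeakDual.toStrongDual φ) ((hmemw φ).mp hφ)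
    simp only [hactwdef]
    rw [this]
    rfl
  have hwdist_eq : ∀ φ χ : WeakDual ℝ X, ∀ s : S,
      NFT.wdist (actw s φ) (actw s χ) =
        ‖act s (WeakDual.toStrongDual φ) - act s (WeakDual.toStrongDual χ)‖ := by
    intro φ χ s
    rw [NFT.wdist_def]
    rfl
  have hnonexpw : ∀ s, ∀ φ ∈ NFT.Qw z, ∀ χ ∈ NFT.Qw z,
      NFT.wdist (actw s φ) (actw s χ) ≤ NFT.wdist φ χ := by
    intro s φ hφ χ hχ
    rw [hwdist_eq, NFT.wdist_def]
    exact hnonexp s _ ((hmemw φ).mp hφ) _ ((hmemw χ).mp hχ)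
  have hcontw : ∀ s, ContinuousOn (actw s) (NFT.Qw z) := by
    intro s
    have h1 := NFT.continuousOn_wd hrefl (f := act s) (Qs := Qs) (hcont s)
    have h2 : StrongDual.toWeakDual '' Qs = NFT.Qw z := by
      ext φ
      constructor
      · rintro ⟨χ, hχ, rfl⟩
        exact (hmemw _).mpr hχ
      · intro h
        exact ⟨WeakDual.toStrongDual φ, (hmemw φ).mp h, rfl⟩
    rw [h2] at h1
    exact h1
  have hdistw : ∀ φ ∈ NFT.Qw z, ∀ χ ∈ NFT.Qw z, φ ≠ χ →
      ∃ δ > 0, δ ≤ NFT.wdist φ χ ∧ ∀ s : S, δ ≤ NFT.wdist (actw s φ) (actw s χ) := by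
    intro φ hφ χ hχ hne
    have hne' : WeakDual.toStrongDual φ ≠ WeakDual.toStrongDual χ := by
      intro h
      exact hne (WeakDual.toStrongDual.injective h)
    obtain ⟨δ, hδpos, hδ1, hδ2⟩ := hdistFull _ ((hmemw φ).mp hφ) _ ((hmemw χ).mp hχ) hne'
    refine ⟨δ, hδpos, ?_, fun s => ?_⟩
    · rw [NFT.wdist_def]; exact hδ1
    · rw [hwdist_eq]; exact hδ2 s
  -- the fixed point sets, and the finite intersection property
  have hQwc : IsCompact (NFT.Qw z) := NFT.isCompact_Qw hz
  haveI : CompactSpace ↥(NFT.Qw z) := isCompact_iff_compactSpace.mp hQwc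
  set Fx : S → Set ↥(NFT.Qw z) := fun s => {t | actw s ↑t = ↑t} with hFx
  have hFxcl : ∀ s, IsClosed (Fx s) := by
    intro s
    have hco : Continuous fun t : ↥(NFT.Qw z) => actw s ↑t :=
      continuousOn_iff_continuous_restrict.mp (hcontw s)
    exact isClosed_eq hco continuous_subtype_val
  have hFIP : ((Set.univ : Set ↥(NFT.Qw z)) ∩ ⋂ s : S, Fx s).Nonempty := by
    rw [Set.nonempty_iff_ne_empty]
    intro hempty
    obtain ⟨u, hu⟩ := IsCompact.elim_finite_subfamily_closed isCompact_univ Fx hFxcl hempty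
    -- common fixed point for the finitely many maps in `u` via `aux`
    haveI : Countable (FreeMonoid ↥(↑u : Set S)) :=
      Countable.of_equiv _ (FreeMonoid.toList (α := ↥(↑u : Set S))).symm
    set aG : FreeMonoid ↥(↑u : Set S) →* Function.End (WeakDual ℝ X) :=
      FreeMonoid.lift (fun a => (actw (↑a : S) : Function.End (WeakDual ℝ X))) with haG
    have haGof : ∀ a : ↥(↑u : Set S), ∀ φ, aG (FreeMonoid.of a) φ = actw (↑a : S) φ := by
      intro a φ
      rw [haG]; rfl
    have haGcons : ∀ (a : ↥(↑u : Set S)) (l : FreeMonoid ↥(↑u : Set S)) (φ : WeakDual ℝ X),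
        aG (FreeMonoid.of a * l) φ = actw (↑a : S) (aG l φ) := by
      intro a l φ
      have h0 : aG (FreeMonoid.of a * l) = aG (FreeMonoid.of a) * aG l := map_mul aG _ _
      have h1 : aG (FreeMonoid.of a * l) φ = (aG (FreeMonoid.of a) * aG l) φ := by rw [h0]
      rw [h1]
      have h2 : (aG (FreeMonoid.of a) * aG l) φ = aG (FreeMonoid.of a) (aG l φ) := rfl
      rw [h2, haGof]
    have haGone : ∀ φ, aG 1 φ = φ := by
      intro φ
      have h0 : aG 1 = 1 := map_one aG
      show aG 1 φ = φ
      rw [h0]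
      rfl
    have haGmaps : ∀ l, MapsTo (fun φ => aG l φ) (NFT.Qw z) (NFT.Qw z) := by
      intro l
      induction l using FreeMonoid.recOn with
      | one => intro φ hφ; simpa [haGone φ] using hφ
      | of_mul a l ih =>
        intro φ hφ
        have := hmapsw ↑a (ih hφ)
        simpa [haGcons a l φ] using this
    have haGcont : ∀ l, ContinuousOn (fun φ => aG l φ) (NFT.Qw z) := by
      intro l
      induction l using FreeMonoid.recOn with
      | one =>
        have : (fun φ => aG 1 φ) = fun φ : WeakDual ℝ X => φ := funext haGone
        rw [this]
        exact continuousOn_id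
      | of_mul a l ih =>
        have : (fun φ => aG (FreeMonoid.of a * l) φ) =
            (actw ↑a) ∘ (fun φ => aG l φ) := funext fun φ => haGcons a l φ
        rw [this]
        exact (hcontw ↑a).comp ih (haGmaps l)
    have haGnonexp : ∀ l, ∀ φ ∈ NFT.Qw z, ∀ χ ∈ NFT.Qw z,
        NFT.wdist (aG l φ) (aG l χ) ≤ NFT.wdist φ χ := by
      intro l
      induction l using FreeMonoid.recOn with
      | one => intro φ _ χ _; rw [haGone, haGone]
      | of_mul a l ih =>
        intro φ hφ χ hχ
        rw [haGcons, haGcons]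
        exact le_trans (hnonexpw ↑a _ (haGmaps l hφ) _ (haGmaps l hχ)) (ih φ hφ χ hχ)
    have hcollapse : ∀ l : FreeMonoid ↥(↑u : Set S), l ≠ 1 →
        ∃ s : S, ∀ ψ ∈ NFT.Qw z, aG l ψ = actw s ψ := by
      intro l
      induction l using FreeMonoid.recOn with
      | one => intro h; exact absurd rfl h
      | of_mul a l ih =>
        intro _
        by_cases hl : l = 1
        · refine ⟨↑a, fun ψ _ => ?_⟩
          rw [hl, mul_one, haGof]
        · obtain ⟨s', hs'⟩ := ih hl
          refine ⟨↑a * s', fun ψ hψ => ?_⟩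
          rw [haGcons, hs' ψ hψ, ← hactw ↑a s' ψ hψ]
    have haGdist : ∀ φ ∈ NFT.Qw z, ∀ χ ∈ NFT.Qw z, φ ≠ χ →
        ∃ δ > 0, ∀ l, δ ≤ NFT.wdist (aG l φ) (aG l χ) := by
      intro φ hφ χ hχ hne
      obtain ⟨δ, hδpos, hδ1, hδ2⟩ := hdistw φ hφ χ hχ hne
      refine ⟨δ, hδpos, fun l => ?_⟩
      by_cases hl : l = 1
      · rw [hl, haGone, haGone]
        exact hδ1
      · obtain ⟨s, hs⟩ := hcollapse l hl
        rw [hs φ hφ, hs χ hχ]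
        exact hδ2 s
    obtain ⟨ψw, hψwQ, hψwfix⟩ := NFT.aux hrefl (fun l => (aG l : WeakDual ℝ X → WeakDual ℝ X))
      hQwc (NFT.convex_Qw hz) (NFT.nonempty_Qw hz) haGmaps
      (fun g h φ _ => by
        have h0 : aG (g * h) = aG g * aG h := map_mul aG _ _
        show aG (g * h) φ = aG g (aG h φ)
        rw [h0]
        rfl) (fun φ _ => haGone φ)
      haGcont haGnonexp haGdist
    have hcontra : (⟨ψw, hψwQ⟩ : ↥(NFT.Qw z)) ∈
        (Set.univ : Set ↥(NFT.Qw z)) ∩ ⋂ s ∈ u, Fx s := by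
      refine ⟨Set.mem_univ _, ?_⟩
      rw [Set.mem_iInter₂]
      intro s hs
      have h1 := hψwfix (FreeMonoid.of (⟨s, hs⟩ : ↥(↑u : Set S)))
      have h2 : actw s ψw = ψw := by
        rw [← haGof ⟨s, hs⟩ ψw]
        exact h1
      exact h2
    rw [hu] at hcontra
    exact hcontra
  obtain ⟨t, -, ht⟩ := hFIP
  refine ⟨WeakDual.toStrongDual ↑t, t.2, fun s => ?_⟩
  have h1 : actw s ↑t = ↑t := by
    have := Set.mem_iInter.mp ht s
    exact this
  have h2 := congrArg (WeakDual.toStrongDual) h1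
  exact h2
end

section
/- Let X be a Banach space, let Q be a weak* compact (respectively weakly compact) convex set, and suppose (S,Q) is a nonexpansive dynamical system such that Q is a minimal S-invariant weak* compact convex set and K ⊂ Q is a norm-compact subset with diam K > 0 and s(K) = K for every s ∈ S. Then the set Q₀ = {x ∈ Q : ‖x − y‖ ≤ r₀ for all y ∈ K}, where r₀ = sup{‖u − y‖ : y ∈ K} < diam K for a suitable u ∈ the closed convex hull of K, is a nonempty weak* compact convex proper subset of Q with s(Q₀) ⊂ Q₀ for each s ∈ S — contradicting minimality. Consequently, under these hypotheses any norm-compact set K with s(K) = K for all s ∈ S must be a singleton, whose unique element is a common fixed point of S. -/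
open NormedSpace Set

open NormedSpace Set Metric

private lemma demarr_lemma {E : Type*} [NormedAddCommGroup E] [NormedSpace ℝ E]
    {K : Set E} (hK : IsCompact K) (hKne : K.Nonempty) (hd : 0 < Metric.diam K) :
    ∃ u ∈ convexHull ℝ K, ∃ r : ℝ, r < Metric.diam K ∧ ∀ y ∈ K, ‖u - y‖ ≤ r := by
  classical
  set d := Metric.diam K with hdd
  by_contra hcon
  push_neg at hcon
  have hKb : Bornology.IsBounded K := hK.isBounded
  have hhullb : Bornology.IsBounded (convexHull ℝ K) := isBounded_convexHull.2 hKb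
  have hdist : ∀ u ∈ convexHull ℝ K, ∀ y ∈ K, ‖u - y‖ ≤ d := by
    intro u hu y hy
    rw [← dist_eq_norm, hdd, ← convexHull_diam K]
    exact dist_le_diam_of_mem hhullb hu (subset_convexHull ℝ K hy)
  -- every point of the hull has a farthest point of `K` at distance exactly `d`
  have hmax : ∀ u : E, ∃ y : E, u ∈ convexHull ℝ K → y ∈ K ∧ ‖u - y‖ = d := by
    intro u
    by_cases hu : u ∈ convexHull ℝ K
    · obtain ⟨y, hyK, hymax⟩ := hK.exists_isMaxOn hKne
        (f := fun y => ‖u - y‖) (continuous_const.sub continuous_id).norm.continuousOn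
      refine ⟨y, fun _ => ⟨hyK, ?_⟩⟩
      rcases lt_or_eq_of_le (hdist u hu y hyK) with h | h
      · obtain ⟨z, hzK, hz⟩ := hcon u hu ‖u - y‖ h
        exact absurd (hymax hzK) (by simpa using not_le.2 hz)
      · exact h
    · exact ⟨hKne.choose, fun h => absurd h hu⟩
  choose pick hpick using hmax
  obtain ⟨x₀, hx₀⟩ := hKne
  -- recursively built sequence: `(g n).1 = f n`, `(g n).2 = ∑_{i ≤ n} f i`
  set g : ℕ → E × E := fun n => Nat.rec (x₀, x₀)
    (fun n p => (pick (((n : ℝ) + 1)⁻¹ • p.2),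
       p.2 + pick (((n : ℝ) + 1)⁻¹ • p.2))) n with hg
  set f : ℕ → E := fun n => (g n).1 with hf
  have hsum : ∀ n, (g n).2 = ∑ i ∈ Finset.range (n + 1), f i := by
    intro n
    induction n with
    | zero => simp [hg, hf]
    | succ k ih =>
        have : (g (k + 1)).2 = (g k).2 + f (k + 1) := rfl
        rw [this, ih]
        exact (Finset.sum_range_succ f (k + 1)).symm
  have key : ∀ n, f n ∈ K ∧ ∀ m, m < n → ‖f m - f n‖ = d := by
    intro n
    induction n using Nat.strong_induction_on with
    | _ n ih =>
      match n with
      | 0 => exact ⟨hx₀, fun m hm => absurd hm (Nat.not_lt_zero m)⟩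
      | (k+1) =>
        have hmemK : ∀ i, i < k + 1 → f i ∈ K := fun i hi => (ih i hi).1
        -- the centroid of `f 0, …, f k`
        set u : E := ((k : ℝ) + 1)⁻¹ • (g k).2 with hu'
        have huval : u = ((k : ℝ) + 1)⁻¹ • ∑ i ∈ Finset.range (k + 1), f i := by
          rw [hu', hsum]
        have hk1pos : (0 : ℝ) < (k : ℝ) + 1 := by positivity
        have huhull : u ∈ convexHull ℝ K := by
          rw [huval]
          have := Finset.centerMass_mem_convexHull (Finset.range (k + 1))
            (w := fun _ : ℕ => (1 : ℝ)) (fun i _ => zero_le_one)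
            (by simpa using hk1pos) (z := f) (fun i hi => hmemK i (Finset.mem_range.1 hi))
          simpa [Finset.centerMass] using this
        have hfk1 : f (k + 1) = pick u := rfl
        have hpu := hpick u huhull
        refine ⟨hfk1 ▸ hpu.1, fun m hm => ?_⟩
        have hmK : f m ∈ K := hmemK m hm
        by_contra hne
        have hlt : ‖f m - f (k + 1)‖ < d :=
          lt_of_le_of_ne (by
            rw [← dist_eq_norm]
            exact dist_le_diam_of_mem hKb hmK (hfk1 ▸ hpu.1)) hne
        -- strict averaging bound
        have hdiff : u - f (k + 1)
            = ((k : ℝ) + 1)⁻¹ • ∑ i ∈ Finset.range (k + 1), (f i - f (k + 1)) := by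
          rw [huval, Finset.sum_sub_distrib, smul_sub, Finset.sum_const,
            Finset.card_range, sub_right_inj, ← Nat.cast_smul_eq_nsmul ℝ, smul_smul,
            Nat.cast_add, Nat.cast_one, inv_mul_cancel₀ (ne_of_gt hk1pos), one_smul]
        have hsumlt : ∑ i ∈ Finset.range (k + 1), ‖f i - f (k + 1)‖
            < ∑ _i ∈ Finset.range (k + 1), d := by
          refine Finset.sum_lt_sum (fun i hi => ?_) ⟨m, Finset.mem_range.2 hm, hlt⟩
          rw [← dist_eq_norm]
          exact dist_le_diam_of_mem hKb (hmemK i (Finset.mem_range.1 hi)) (hfk1 ▸ hpu.1)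
        have hnorm : ‖u - f (k + 1)‖ < d := by
          rw [hdiff, norm_smul]
          calc ‖(((k : ℝ) + 1)⁻¹)‖ * ‖∑ i ∈ Finset.range (k + 1), (f i - f (k + 1))‖
              ≤ ((k : ℝ) + 1)⁻¹ * ∑ i ∈ Finset.range (k + 1), ‖f i - f (k + 1)‖ := by
                rw [Real.norm_eq_abs, abs_of_pos (by positivity)]
                exact mul_le_mul_of_nonneg_left (norm_sum_le _ _) (by positivity)
            _ < ((k : ℝ) + 1)⁻¹ * ∑ _i ∈ Finset.range (k + 1), d := by
                exact mul_lt_mul_of_pos_left hsumlt (by positivity)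
            _ = d := by
                rw [Finset.sum_const, Finset.card_range, nsmul_eq_mul]
                field_simp
                exact Nat.cast_succ k
        rw [hfk1] at hnorm
        exact absurd hpu.2 (ne_of_lt hnorm)
  -- the sequence is `d`-separated, contradicting total boundedness of `K`
  have hsep : ∀ m n : ℕ, m ≠ n → d ≤ dist (f m) (f n) := by
    intro m n hmn
    rcases hmn.lt_or_gt with h | h
    · rw [dist_eq_norm]; exact le_of_eq ((key n).2 m h).symm
    · rw [dist_comm, dist_eq_norm]; exact le_of_eq ((key m).2 n h).symm
  obtain ⟨t, htfin, htcov⟩ := (totallyBounded_iff.1 hK.totallyBounded) (d / 3)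
    (by linarith)
  have hc : ∀ n : ℕ, ∃ c ∈ t, f n ∈ ball c (d / 3) := by
    intro n
    have := htcov (key n).1
    simpa using this
  choose c hct hcb using hc
  have : ∃ m n : ℕ, m ≠ n ∧ c m = c n := by
    have hfin : t.Finite := htfin
    have : ¬ Function.Injective c := by
      intro hinj
      exact Set.infinite_range_of_injective hinj (hfin.subset (range_subset_iff.2 hct))
    simp only [Function.Injective, not_forall] at this
    obtain ⟨m, n, hcmn, hmn⟩ := this
    exact ⟨m, n, hmn, hcmn⟩
  obtain ⟨m, n, hmn, hcmn⟩ := this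
  have : dist (f m) (f n) < d := by
    calc dist (f m) (f n) ≤ dist (f m) (c m) + dist (c n) (f n) := by
          rw [hcmn]; exact dist_triangle _ _ _
      _ < d / 3 + d / 3 := by
          refine add_lt_add ?_ ?_
          · exact mem_ball.1 (hcb m)
          · rw [dist_comm]; exact mem_ball.1 (hcb n)
      _ < d := by linarith
  exact absurd (hsep m n hmn) (not_le.2 this)


/-- **The DeMarr argument for minimal sets.**
Let `Q` be a minimal `S`-invariant weak* compact convex subset of a dual Banach
space on which `(S, Q)` is a nonexpansive dynamical system, and let `K ⊆ Q` be a
nonempty norm-compact subset with `s(K) = K` for every `s ∈ S`.  If `diam K > 0`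
then, for suitable `u` in the closed convex hull of `K` and
`r₀ = sup{‖u − y‖ : y ∈ K} < diam K`, the set `Q₀ = {x ∈ Q : ‖x − y‖ ≤ r₀ ∀ y ∈ K}`
is a nonempty weak* compact convex proper `S`-invariant subset of `Q` — contradicting
minimality.  Consequently `K` is a singleton whose element is a common fixed point of
`S`. -/
theorem demarr_argument_minimal_invariant_set
    {X : Type*} [NormedAddCommGroup X] [NormedSpace ℝ X] [CompleteSpace X]
    (Q : Set (StrongDual ℝ X)) (hQne : Q.Nonempty)
    (hQcomp : IsCompact (StrongDual.toWeakDual '' Q))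
    (hQconv : Convex ℝ Q)
    {S : Type*} [Semigroup S] (act : S → StrongDual ℝ X → StrongDual ℝ X)
    -- `(S, Q)` is a dynamical system for the weak* topology on `Q`
    (hmaps : ∀ s : S, Set.MapsTo (act s) Q Q)
    (hact : ∀ s t : S, ∀ x ∈ Q, act (s * t) x = act s (act t x))
    (hcont : ∀ s : S, ContinuousOn
      (fun x : WeakDual ℝ X => StrongDual.toWeakDual (act s (WeakDual.toStrongDual x)))
      (StrongDual.toWeakDual '' Q))
    -- nonexpansive
    (hnonexp : ∀ s : S, ∀ x ∈ Q, ∀ y ∈ Q, ‖act s x - act s y‖ ≤ ‖x - y‖)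
    -- `Q` is a *minimal* `S`-invariant weak* compact convex set
    (hQmin : ∀ Q' : Set (StrongDual ℝ X), Q'.Nonempty → Q' ⊆ Q →
      IsCompact (StrongDual.toWeakDual '' Q') → Convex ℝ Q' →
      (∀ s : S, Set.MapsTo (act s) Q' Q') → Q' = Q)
    -- `K ⊆ Q` is nonempty, norm-compact, and `s(K) = K` for all `s ∈ S`
    (K : Set (StrongDual ℝ X)) (hKQ : K ⊆ Q) (hKne : K.Nonempty) (hKcomp : IsCompact K)
    (hKinv : ∀ s : S, act s '' K = K) :
    -- if `diam K > 0`, then `Q₀` contradicts the minimality of `Q` ...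
    (0 < Metric.diam K →
      ∀ u ∈ closure (convexHull ℝ K), ∀ r₀ : ℝ,
        (∀ y ∈ K, ‖u - y‖ ≤ r₀) → r₀ < Metric.diam K →
        ({x ∈ Q | ∀ y ∈ K, ‖x - y‖ ≤ r₀}.Nonempty ∧
          IsCompact (StrongDual.toWeakDual '' {x ∈ Q | ∀ y ∈ K, ‖x - y‖ ≤ r₀}) ∧
          Convex ℝ {x ∈ Q | ∀ y ∈ K, ‖x - y‖ ≤ r₀} ∧
          {x ∈ Q | ∀ y ∈ K, ‖x - y‖ ≤ r₀} ≠ Q ∧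
          ∀ s : S, Set.MapsTo (act s) {x ∈ Q | ∀ y ∈ K, ‖x - y‖ ≤ r₀}
            {x ∈ Q | ∀ y ∈ K, ‖x - y‖ ≤ r₀})) ∧
    -- ... consequently `K` is a singleton consisting of a common fixed point of `S`
    ∃ x : StrongDual ℝ X, K = {x} ∧ ∀ s : S, act s x = x := by
  classical
  have hinj : Function.Injective (StrongDual.toWeakDual (𝕜 := ℝ) (E := X)) :=
    StrongDual.toWeakDual.injective
  have hQclosed : IsClosed Q := by
    have h1 : IsClosed (StrongDual.toWeakDual '' Q) := hQcomp.isClosed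
    have h2 := h1.preimage NormedSpace.Dual.toWeakDual_continuous
    rwa [Set.preimage_image_eq Q hinj] at h2
  have hhullQ : closure (convexHull ℝ K) ⊆ Q :=
    hQclosed.closure_subset_iff.mpr (convexHull_min hKQ hQconv)
  have hpart1 : (0 < Metric.diam K →
      ∀ u ∈ closure (convexHull ℝ K), ∀ r₀ : ℝ,
        (∀ y ∈ K, ‖u - y‖ ≤ r₀) → r₀ < Metric.diam K →
        ({x ∈ Q | ∀ y ∈ K, ‖x - y‖ ≤ r₀}.Nonempty ∧
          IsCompact (StrongDual.toWeakDual '' {x ∈ Q | ∀ y ∈ K, ‖x - y‖ ≤ r₀}) ∧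
          Convex ℝ {x ∈ Q | ∀ y ∈ K, ‖x - y‖ ≤ r₀} ∧
          {x ∈ Q | ∀ y ∈ K, ‖x - y‖ ≤ r₀} ≠ Q ∧
          ∀ s : S, Set.MapsTo (act s) {x ∈ Q | ∀ y ∈ K, ‖x - y‖ ≤ r₀}
            {x ∈ Q | ∀ y ∈ K, ‖x - y‖ ≤ r₀})) := by
    intro hd u hu r₀ hr₀ hrd
    obtain ⟨y₀, hy₀⟩ := hKne
    have hr₀0 : 0 ≤ r₀ := le_trans (norm_nonneg _) (hr₀ y₀ hy₀)
    refine ⟨⟨u, hhullQ hu, hr₀⟩, ?_, ?_, ?_, ?_⟩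
    · -- weak* compactness
      have hQ0eq : {x ∈ Q | ∀ y ∈ K, ‖x - y‖ ≤ r₀}
          = Q ∩ (StrongDual.toWeakDual ⁻¹'
              (⋂ y ∈ K, WeakDual.toStrongDual ⁻¹' Metric.closedBall y r₀)) := by
        ext x
        simp only [Set.mem_sep_iff, Set.mem_inter_iff, Set.mem_preimage, Set.mem_iInter,
          Metric.mem_closedBall, dist_eq_norm]
        rfl
      rw [hQ0eq, Set.image_inter_preimage]
      exact hQcomp.inter_right
        (isClosed_biInter fun y _ => WeakDual.isClosed_closedBall y r₀)
    · -- convexity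
      have hQ0eq : {x ∈ Q | ∀ y ∈ K, ‖x - y‖ ≤ r₀}
          = Q ∩ ⋂ y ∈ K, Metric.closedBall y r₀ := by
        ext x
        simp [dist_eq_norm]
      rw [hQ0eq]
      exact hQconv.inter (convex_iInter₂ fun y _ => convex_closedBall y r₀)
    · -- proper subset
      intro heq
      have hle : Metric.diam K ≤ r₀ := by
        refine Metric.diam_le_of_forall_dist_le hr₀0 fun x hx y hy => ?_
        have hxQ0 : x ∈ {x ∈ Q | ∀ y ∈ K, ‖x - y‖ ≤ r₀} := by
          rw [heq]; exact hKQ hx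
        rw [dist_eq_norm]
        exact hxQ0.2 y hy
      exact absurd hrd (not_lt.2 hle)
    · -- invariance
      intro s x hx
      refine ⟨hmaps s hx.1, fun y hy => ?_⟩
      have : y ∈ act s '' K := (hKinv s).symm ▸ hy
      obtain ⟨y', hy', rfl⟩ := this
      calc ‖act s x - act s y'‖ ≤ ‖x - y'‖ := hnonexp s x hx.1 y' (hKQ hy')
        _ ≤ r₀ := hx.2 y' hy'
  refine ⟨hpart1, ?_⟩
  by_cases hd : 0 < Metric.diam K
  · exfalso
    obtain ⟨u, hu, r, hrd, hr⟩ := demarr_lemma hKcomp hKne hd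
    obtain ⟨hne, hcomp, hconv, hneq, hinv⟩ :=
      hpart1 hd u (subset_closure hu) r hr hrd
    exact hneq (hQmin _ hne (Set.sep_subset _ _) hcomp hconv hinv)
  · have hd0 : Metric.diam K = 0 := le_antisymm (not_lt.1 hd) Metric.diam_nonneg
    obtain ⟨x, hx⟩ := hKne
    have hsing : K = {x} := by
      ext y
      simp only [Set.mem_singleton_iff]
      constructor
      · intro hy
        have := Metric.dist_le_diam_of_mem hKcomp.isBounded hy hx
        rw [hd0] at this
        exact dist_le_zero.1 this
      · rintro rfl; exact hx
    refine ⟨x, hsing, fun s => ?_⟩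
    have h1 : act s '' {x} = {x} := hsing ▸ hKinv s
    have h2 : act s x ∈ act s '' ({x} : Set (StrongDual ℝ X)) := ⟨x, rfl, rfl⟩
    rw [h1] at h2
    exact h2
end

section
/- Let (X,τ) be a locally convex space whose topology is determined by a family 𝒩 of seminorms, and let K be a nonempty τ-compact subset of X with p-diameter sup{p(x−y) : x,y ∈ K} = r > 0 for some continuous seminorm p ∈ 𝒩. Then there exists u in the closed convex hull of K such that sup{p(x − u) : x ∈ K} < r. -/
open Set

private lemma seminorm_sum_le' {X : Type*} [AddCommGroup X] [Module ℝ X]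
    (q : Seminorm ℝ X) {α : Type*} (s : Finset α) (f : α → X) :
    q (∑ c ∈ s, f c) ≤ ∑ c ∈ s, q (f c) := by
  classical
  induction s using Finset.induction with
  | empty => simp
  | insert _ _ hx ih =>
    rw [Finset.sum_insert hx, Finset.sum_insert hx]
    exact (map_add_le_add q _ _).trans (by gcongr)

/-- **DeMarr's lemma in locally convex spaces.**
Let `(X, τ)` be a locally convex space whose topology is determined by a family
`𝒩 = (p i)` of seminorms, and let `K` be a nonempty `τ`-compact subset of `X` whose
`p i`-diameter `r = sup{p i (x − y) : x, y ∈ K}` is positive, for some seminorm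
`p i ∈ 𝒩`.  Then there exists `u` in the closed convex hull of `K` with
`sup{p i (x − u) : x ∈ K} < r`. -/
theorem demarr_lemma_locally_convex
    {X : Type*} [AddCommGroup X] [Module ℝ X] [TopologicalSpace X]
    [IsTopologicalAddGroup X] [ContinuousSMul ℝ X]
    {ι : Type*} [Nonempty ι] (p : SeminormFamily ℝ X ι)
    -- the topology `τ` of `X` is determined by the family of seminorms `p`
    (hp : WithSeminorms p)
    (K : Set X) (hKne : K.Nonempty) (hKcomp : IsCompact K)
    (i : ι) (r : ℝ)
    -- `r` is the `p i`-diameter of `K` and `r > 0`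
    (hr : r = sSup {d : ℝ | ∃ x ∈ K, ∃ y ∈ K, d = p i (x - y)}) (hrpos : 0 < r) :
    ∃ u ∈ closure (convexHull ℝ K), sSup ((fun x => p i (x - u)) '' K) < r := by
  classical
  have hcont : Continuous (p i) := hp.continuous_seminorm i
  -- each p i (x - y) ≤ r
  have hbdd : BddAbove {d : ℝ | ∃ x ∈ K, ∃ y ∈ K, d = p i (x - y)} := by
    have hc : IsCompact ((fun z : X × X => p i (z.1 - z.2)) '' (K ×ˢ K)) :=
      (hKcomp.prod hKcomp).image (hcont.comp continuous_sub)
    refine hc.bddAbove.mono ?_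
    rintro d ⟨x, hx, y, hy, rfl⟩
    exact ⟨(x, y), ⟨hx, hy⟩, rfl⟩
  have hle : ∀ x ∈ K, ∀ y ∈ K, p i (x - y) ≤ r := fun x hx y hy => by
    rw [hr]; exact le_csSup hbdd ⟨x, hx, y, hy, rfl⟩
  -- finite r/2-net with centers in K
  have hcover : K ⊆ ⋃ c ∈ K, {y | p i (y - c) < r / 2} := fun x hx => by
    refine mem_biUnion hx ?_
    simp [hrpos]
  obtain ⟨t, htK, htfin, htcov⟩ := hKcomp.elim_finite_subcover_image
    (fun c _ => isOpen_lt (hcont.comp (continuous_sub_right c)) continuous_const) hcover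
  set s : Finset X := htfin.toFinset with hs
  have hsK : ∀ c ∈ s, c ∈ K := fun c hc => htK (htfin.mem_toFinset.mp hc)
  have hsne : s.Nonempty := by
    obtain ⟨x, hx⟩ := hKne
    obtain ⟨c, hc, hxc⟩ := mem_iUnion₂.mp (htcov hx)
    exact ⟨c, htfin.mem_toFinset.mpr hc⟩
  set n : ℕ := s.card with hn
  have hnpos : (0:ℝ) < n := by exact_mod_cast Finset.card_pos.mpr hsne
  set u : X := (n : ℝ)⁻¹ • ∑ c ∈ s, c with hu
  have huK : u ∈ convexHull ℝ K := by
    have := s.centerMass_mem_convexHull (w := fun _ => (1:ℝ))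
      (fun c _ => zero_le_one) (by simpa [hn] using hnpos) (z := id) (fun c hc => hsK c hc)
    simpa [Finset.centerMass, hu, hn] using this
  refine ⟨u, subset_closure huK, ?_⟩
  -- the key bound
  have key : ∀ x ∈ K, p i (x - u) ≤ r - r / (2 * n) := by
    intro x hx
    obtain ⟨c₀, hc₀, hxc₀⟩ := mem_iUnion₂.mp (htcov hx)
    have hc₀s : c₀ ∈ s := htfin.mem_toFinset.mpr hc₀
    have hxu : x - u = (n : ℝ)⁻¹ • ∑ c ∈ s, (x - c) := by
      rw [Finset.sum_sub_distrib, Finset.sum_const, smul_sub, hu]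
      rw [← Nat.cast_smul_eq_nsmul ℝ, inv_smul_smul₀ (ne_of_gt hnpos)]
    have hsum : ∑ c ∈ s, p i (x - c) ≤ r / 2 + (n - 1) * r := by
      rw [← Finset.add_sum_erase _ _ hc₀s]
      have h1 : p i (x - c₀) ≤ r / 2 := le_of_lt hxc₀
      have h2 : ∑ c ∈ s.erase c₀, p i (x - c) ≤ (n - 1) * r := by
        calc ∑ c ∈ s.erase c₀, p i (x - c) ≤ ∑ c ∈ s.erase c₀, r :=
              Finset.sum_le_sum fun c hc => hle x hx c (hsK c (Finset.mem_of_mem_erase hc))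
          _ = ((s.erase c₀).card : ℝ) * r := by rw [Finset.sum_const, nsmul_eq_mul]
          _ = (n - 1) * r := by
              rw [Finset.card_erase_of_mem hc₀s,
                Nat.cast_sub (Finset.card_pos.mpr hsne)]
              simp [hn]
      exact add_le_add h1 h2
    calc p i (x - u) = (n:ℝ)⁻¹ * p i (∑ c ∈ s, (x - c)) := by
          rw [hxu, map_smul_eq_mul]; simp [abs_of_pos hnpos]
      _ ≤ (n:ℝ)⁻¹ * (r / 2 + (n - 1) * r) := by
          gcongr
          exact (seminorm_sum_le' (p i) s _).trans hsum
      _ = r - r / (2 * n) := by field_simp; ring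
  have himgne : ((fun x => p i (x - u)) '' K).Nonempty := hKne.image _
  have : sSup ((fun x => p i (x - u)) '' K) ≤ r - r / (2 * n) := by
    refine csSup_le himgne ?_
    rintro d ⟨x, hx, rfl⟩
    exact key x hx
  refine lt_of_le_of_lt this ?_
  have : 0 < r / (2 * n) := by positivity
  linarith
end
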